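/- arXiv:1708.08075 — 9 statements merged into one kernel-verified Lean document; each statement's English description precedes it below -/
import Mathlib

section
/- Under these hypotheses, for every t > 0 the series defining p(t) converges (so p(t) < ∞), and lim_{t→0+} (log p(t))/(log t) = −β/(β − L). (This is the analytic content of equation (1.2) of Theorem 1.1: with L = log λ, the on-diagonal heat kernel of the jump process on the Martin boundary of a supercritical Galton–Watson tree satisfies −lim_{t→0} log p_t^λ(ω,ω)/log t = β_λ/(β_λ − log λ) for HARM-a.e. ω, ℙ_GW-a.s.) -/
open Filter Set Real Topology

/-!
Write `H n ≈ e^{-βn}` and `D n ≈ e^{-γn}` with `γ = β - L > 0`. Since the weights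
`1 / H (n + 1) - 1 / H n` telescope, the levels `n < m` with `D m ≥ t` already contribute
`e⁻¹ (1 / H m - 1)`; taking `m ≈ -log t / γ` gives `log p(t) ≳ (β / γ) (-log t)`.
Conversely `e^{-y} ≤ (s / y)^s` for every `s > 0`, so for `s > β / γ` the `n`-th term is at most
`C t^{-s}` times a geometric sequence, and `log p(t) ≤ s (-log t) + O(1)`.
-/

lemma exists_le_add_mul_of_tendsto_div {u : ℕ → ℝ} {c c' : ℝ}
    (hu : Tendsto (fun n : ℕ => u n / n) atTop (𝓝 c)) (hc : c < c') :
    ∃ M, ∀ n, u n ≤ M + c' * n := by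
  have hev : ∀ᶠ n : ℕ in atTop, u n - c' * n ≤ 0 := by
    filter_upwards [hu.eventually_lt_const hc, eventually_gt_atTop 0] with n hn hn0
    rw [div_lt_iff₀ (Nat.cast_pos.2 hn0)] at hn
    linarith
  obtain ⟨M, hM⟩ := (isBoundedUnder_of_eventually_le hev).bddAbove_range
  exact ⟨M, fun n => by linarith [hM (mem_range_self n)]⟩

lemma tendsto_comp_succ_div {u : ℕ → ℝ} {c : ℝ}
    (hu : Tendsto (fun n : ℕ => u n / n) atTop (𝓝 c)) :
    Tendsto (fun n : ℕ => u (n + 1) / n) atTop (𝓝 c) := by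
  have hshift : Tendsto (fun n : ℕ => u (n + 1) / (n + 1 : ℕ)) atTop (𝓝 c) :=
    (tendsto_add_atTop_iff_nat 1).2 hu
  have := hshift.div (tendsto_natCast_div_add_atTop (1 : ℝ)) one_ne_zero
  rw [div_one] at this
  refine this.congr' ?_
  filter_upwards [eventually_gt_atTop 0] with n hn
  have : (n : ℝ) ≠ 0 := Nat.cast_ne_zero.2 hn.ne'
  simp only [Pi.div_apply]
  push_cast
  field_simp

lemma tendsto_comp_floor_div {u : ℕ → ℝ} {c r : ℝ} (hr : 0 < r)
    (hu : Tendsto (fun n : ℕ => u n / n) atTop (𝓝 c)) :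
    Tendsto (fun x : ℝ => u ⌊x / r⌋₊ / x) atTop (𝓝 (c / r)) := by
  have hx : Tendsto (fun x : ℝ => x / r) atTop atTop := tendsto_id.atTop_div_const hr
  have hfloor := tendsto_nat_floor_atTop.comp hx
  have := ((hu.comp hfloor).mul (tendsto_nat_floor_div_atTop.comp hx)).div_const r
  rw [mul_one] at this
  refine this.congr' ?_
  filter_upwards [hfloor.eventually_gt_atTop 0, eventually_gt_atTop 0] with x hm hx0
  have : (⌊x / r⌋₊ : ℝ) ≠ 0 := Nat.cast_ne_zero.2 hm.ne'
  simp only [Function.comp_apply]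
  field_simp

lemma neg_le_mul_log_sub_log {y s : ℝ} (hy : 0 < y) (hs : 0 < s) :
    -y ≤ s * (log s - log y) := by
  have hlog := log_le_sub_one_of_pos (div_pos hy hs)
  rw [log_div hy.ne' hs.ne'] at hlog
  have : s * (log y - log s) ≤ y - s :=
    calc s * (log y - log s) ≤ s * (y / s - 1) := mul_le_mul_of_nonneg_left hlog hs.le
      _ = y - s := by field_simp
  linarith

lemma tendsto_neg_log_nhdsGT_zero : Tendsto (fun t => -log t) (𝓝[>] 0) atTop :=
  tendsto_neg_atBot_atTop.comp tendsto_log_nhdsGT_zero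

noncomputable def heatTerm (H D : ℕ → ℝ) (t : ℝ) (n : ℕ) : ℝ :=
  (1 / H (n + 1) - 1 / H n) * exp (-t / D n)

noncomputable def heatSeries (H D : ℕ → ℝ) (t : ℝ) : ℝ :=
  1 + ∑' n, heatTerm H D t n

section HeatSeries

variable {H D : ℕ → ℝ} {β γ : ℝ}

lemma heatTerm_nonneg (hH_anti : Antitone H) (hH_pos : ∀ n, 0 < H n) (t : ℝ) (n : ℕ) :
    0 ≤ heatTerm H D t n :=
  mul_nonneg (sub_nonneg.2 (one_div_le_one_div_of_le (hH_pos _) (hH_anti n.le_succ)))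
    (exp_nonneg _)

lemma heatTerm_le (hH_pos : ∀ n, 0 < H n) (hD_pos : ∀ n, 0 < D n) {s t : ℝ} (hs : 0 < s)
    (ht : 0 < t) (n : ℕ) :
    heatTerm H D t n ≤ exp (-log (H (n + 1)) + s * log (D n)) * exp (s * (log s - log t)) := by
  have hweight : 1 / H (n + 1) - 1 / H n ≤ exp (-log (H (n + 1))) := by
    rw [exp_neg, exp_log (hH_pos _), ← one_div]
    linarith [one_div_pos.2 (hH_pos n)]
  have hexp : exp (-t / D n) ≤ exp (s * log (D n)) * exp (s * (log s - log t)) := by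
    rw [← exp_add, exp_le_exp, neg_div]
    have := neg_le_mul_log_sub_log (div_pos ht (hD_pos n)) hs
    rw [log_div ht.ne' (hD_pos n).ne'] at this
    linarith
  calc heatTerm H D t n
      ≤ exp (-log (H (n + 1))) * (exp (s * log (D n)) * exp (s * (log s - log t))) :=
        mul_le_mul hweight hexp (exp_nonneg _) (exp_nonneg _)
    _ = _ := by rw [exp_add, mul_assoc]

lemma exists_heatTerm_le_geometric (hH_pos : ∀ n, 0 < H n) (hD_pos : ∀ n, 0 < D n)
    (hH : Tendsto (fun n : ℕ => log (H n) / n) atTop (𝓝 (-β)))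
    (hD : Tendsto (fun n : ℕ => log (D n) / n) atTop (𝓝 (-γ))) (hγ : 0 < γ)
    {s : ℝ} (hs0 : 0 < s) (hs : β / γ < s) :
    ∃ C r, 0 ≤ C ∧ 0 ≤ r ∧ r < 1 ∧
      ∀ t, 0 < t → ∀ n, heatTerm H D t n ≤ C * exp (-(s * log t)) * r ^ n := by
  have hrate : Tendsto (fun n : ℕ => (-log (H (n + 1)) + s * log (D n)) / n) atTop
      (𝓝 (β - s * γ)) := by
    have := (tendsto_comp_succ_div hH).neg.add (hD.const_mul s)
    rw [neg_neg, mul_neg, ← sub_eq_add_neg] at this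
    refine this.congr fun n => ?_
    rw [add_div, neg_div, mul_div_assoc]
  have hη : β - s * γ < (β - s * γ) / 2 := by
    have := (div_lt_iff₀ hγ).1 hs
    linarith
  obtain ⟨M, hM⟩ := exists_le_add_mul_of_tendsto_div hrate hη
  refine ⟨exp (M + s * log s), exp ((β - s * γ) / 2), (exp_pos _).le, (exp_pos _).le,
    exp_lt_one_iff.2 (by linarith), fun t ht n => (heatTerm_le hH_pos hD_pos hs0 ht n).trans ?_⟩
  rw [← exp_nat_mul, ← exp_add, ← exp_add, ← exp_add, exp_le_exp]
  linarith [hM n]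

lemma summable_heatTerm (hH_anti : Antitone H) (hH_pos : ∀ n, 0 < H n) (hD_pos : ∀ n, 0 < D n)
    (hH : Tendsto (fun n : ℕ => log (H n) / n) atTop (𝓝 (-β)))
    (hD : Tendsto (fun n : ℕ => log (D n) / n) atTop (𝓝 (-γ))) (hγ : 0 < γ)
    {t : ℝ} (ht : 0 < t) : Summable (heatTerm H D t) := by
  obtain ⟨C, r, -, hr0, hr1, hle⟩ := exists_heatTerm_le_geometric hH_pos hD_pos hH hD hγ
    (s := |β / γ| + 1) (by positivity) (by linarith [le_abs_self (β / γ)])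
  exact Summable.of_nonneg_of_le (heatTerm_nonneg hH_anti hH_pos t) (hle t ht)
    ((summable_geometric_of_lt_one hr0 hr1).mul_left _)

lemma exists_log_heatSeries_le (hH_anti : Antitone H) (hH_pos : ∀ n, 0 < H n)
    (hD_pos : ∀ n, 0 < D n) (hH : Tendsto (fun n : ℕ => log (H n) / n) atTop (𝓝 (-β)))
    (hD : Tendsto (fun n : ℕ => log (D n) / n) atTop (𝓝 (-γ))) (hγ : 0 < γ)
    {s : ℝ} (hs0 : 0 < s) (hs : β / γ < s) :
    ∃ K, ∀ t, 0 < t → t ≤ 1 → log (heatSeries H D t) ≤ K + s * -log t := by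
  obtain ⟨C, r, hC, hr0, hr1, hle⟩ := exists_heatTerm_le_geometric hH_pos hD_pos hH hD hγ hs0 hs
  refine ⟨log (1 + C * (1 - r)⁻¹), fun t ht ht1 => ?_⟩
  have hgeom := summable_geometric_of_lt_one hr0 hr1
  have hsum : ∑' n, heatTerm H D t n ≤ C * exp (-(s * log t)) * (1 - r)⁻¹ := by
    rw [← tsum_geometric_of_lt_one hr0 hr1, ← tsum_mul_left]
    exact (summable_heatTerm hH_anti hH_pos hD_pos hH hD hγ ht).tsum_le_tsum (hle t ht)
      (hgeom.mul_left _)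
  have hone : 1 ≤ exp (-(s * log t)) :=
    one_le_exp (by nlinarith [log_nonpos ht.le ht1])
  have hA : 0 < 1 + C * (1 - r)⁻¹ := by
    have : 0 < 1 - r := by linarith
    positivity
  have hp : 0 < heatSeries H D t :=
    add_pos_of_pos_of_nonneg one_pos (tsum_nonneg (heatTerm_nonneg hH_anti hH_pos t))
  calc log (heatSeries H D t) ≤ log ((1 + C * (1 - r)⁻¹) * exp (-(s * log t))) := by
        refine log_le_log hp ?_
        rw [heatSeries]
        nlinarith [mul_nonneg hC (inv_nonneg.2 (by linarith : (0 : ℝ) ≤ 1 - r))]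
    _ = _ := by rw [log_mul hA.ne' (exp_pos _).ne', log_exp, mul_neg]

lemma exp_neg_one_div_le_heatSeries (hH_anti : Antitone H) (hH0 : H 0 = 1)
    (hH_pos : ∀ n, 0 < H n) (hD_anti : Antitone D) (hD_pos : ∀ n, 0 < D n) {t : ℝ}
    (hsum : Summable (heatTerm H D t)) {m : ℕ} (htm : t ≤ D m) :
    exp (-1) / H m ≤ heatSeries H D t := by
  have hhead : exp (-1) * (1 / H m - 1) ≤ ∑ i ∈ Finset.range m, heatTerm H D t i := by
    have htel : ∑ i ∈ Finset.range m, (1 / H (i + 1) - 1 / H i) = 1 / H m - 1 := by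
      rw [Finset.sum_range_sub (fun n => 1 / H n), hH0, div_one]
    rw [← htel, Finset.mul_sum]
    refine Finset.sum_le_sum fun i hi => ?_
    have hti : t / D i ≤ 1 :=
      (div_le_one (hD_pos i)).2 (htm.trans (hD_anti (Finset.mem_range.1 hi).le))
    rw [heatTerm, mul_comm]
    exact mul_le_mul_of_nonneg_left (exp_le_exp.2 (by rw [neg_div]; linarith))
      (sub_nonneg.2 (one_div_le_one_div_of_le (hH_pos _) (hH_anti i.le_succ)))
  have htail := hsum.sum_le_tsum (Finset.range m) fun i _ => heatTerm_nonneg hH_anti hH_pos t i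
  have he : exp (-1) ≤ 1 := exp_le_one_iff.2 (by norm_num)
  rw [heatSeries, div_eq_mul_one_div]
  linarith

lemma eventually_le_apply_floor_neg_log_div (hD_pos : ∀ n, 0 < D n)
    (hD : Tendsto (fun n : ℕ => log (D n) / n) atTop (𝓝 (-γ))) {r : ℝ} (hr0 : 0 < r)
    (hr : γ < r) : ∀ᶠ t in 𝓝[>] 0, t ≤ D ⌊-log t / r⌋₊ := by
  obtain ⟨n₀, hn₀⟩ := eventually_atTop.1 <|
    (hD.eventually_const_lt (neg_lt_neg hr)).and (eventually_gt_atTop 0)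
  have hS := tendsto_neg_log_nhdsGT_zero
  filter_upwards [self_mem_nhdsWithin, hS.eventually_ge_atTop 0,
    (tendsto_nat_floor_atTop.comp (hS.atTop_div_const hr0)).eventually_ge_atTop n₀]
    with t ht hS0 hm
  simp only [Function.comp_apply] at hm
  have hfloor := Nat.floor_le (div_nonneg hS0 hr0.le)
  rw [le_div_iff₀ hr0] at hfloor
  obtain ⟨hlog, hpos⟩ := hn₀ _ hm
  rw [lt_div_iff₀ (Nat.cast_pos.2 hpos)] at hlog
  rw [← log_le_log_iff ht (hD_pos _)]
  linarith

lemma eventually_lt_log_heatSeries_div_neg_log (hH_anti : Antitone H) (hH0 : H 0 = 1)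
    (hH_pos : ∀ n, 0 < H n) (hD_anti : Antitone D) (hD_pos : ∀ n, 0 < D n)
    (hH : Tendsto (fun n : ℕ => log (H n) / n) atTop (𝓝 (-β)))
    (hD : Tendsto (fun n : ℕ => log (D n) / n) atTop (𝓝 (-γ))) (hβ : 0 < β) (hγ : 0 < γ)
    {a : ℝ} (ha : a < β / γ) :
    ∀ᶠ t in 𝓝[>] 0, a < log (heatSeries H D t) / -log t := by
  have hS := tendsto_neg_log_nhdsGT_zero
  obtain ⟨a', ha', ha'β⟩ := exists_between (max_lt ha (div_pos hβ hγ))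
  have ha'0 : 0 < a' := (le_max_right a 0).trans_lt ha'
  -- Compare with the level `m = ⌊-log t / r⌋₊`, `r = β / a' > γ`: then `D m ≥ t` and
  -- `-log (H m) ≈ a' (-log t)`.
  have hr : γ < β / a' := by rwa [lt_div_iff₀ ha'0, mul_comm, ← lt_div_iff₀ hγ]
  have hlow : Tendsto (fun t => -log (H ⌊-log t / (β / a')⌋₊) / -log t - (-log t)⁻¹)
      (𝓝[>] 0) (𝓝 a') := by
    have hHneg : Tendsto (fun n : ℕ => -log (H n) / n) atTop (𝓝 β) := by
      simpa only [neg_div, neg_neg] using hH.neg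
    have := ((tendsto_comp_floor_div (div_pos hβ ha'0) hHneg).comp hS).sub
      (tendsto_inv_atTop_zero.comp hS)
    rwa [sub_zero, div_div_cancel₀ hβ.ne'] at this
  filter_upwards [self_mem_nhdsWithin, hS.eventually_gt_atTop 0,
    eventually_le_apply_floor_neg_log_div hD_pos hD (div_pos hβ ha'0) hr,
    hlow.eventually_const_lt ((le_max_left a 0).trans_lt ha')] with t ht hS0 htD hat
  have hp := exp_neg_one_div_le_heatSeries hH_anti hH0 hH_pos hD_anti hD_pos
    (summable_heatTerm hH_anti hH_pos hD_pos hH hD hγ ht) htD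
  have hlog := log_le_log (div_pos (exp_pos _) (hH_pos _)) hp
  rw [log_div (exp_pos _).ne' (hH_pos _).ne', log_exp] at hlog
  calc a < _ := hat
    _ = (-1 - log (H ⌊-log t / (β / a')⌋₊)) / -log t := by field_simp; ring
    _ ≤ _ := div_le_div_of_nonneg_right hlog hS0.le

lemma eventually_log_heatSeries_div_neg_log_lt (hH_anti : Antitone H) (hH_pos : ∀ n, 0 < H n)
    (hD_pos : ∀ n, 0 < D n) (hH : Tendsto (fun n : ℕ => log (H n) / n) atTop (𝓝 (-β)))
    (hD : Tendsto (fun n : ℕ => log (D n) / n) atTop (𝓝 (-γ))) (hβ : 0 < β) (hγ : 0 < γ)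
    {b : ℝ} (hb : β / γ < b) :
    ∀ᶠ t in 𝓝[>] 0, log (heatSeries H D t) / -log t < b := by
  have hS := tendsto_neg_log_nhdsGT_zero
  obtain ⟨s, hs, hsb⟩ := exists_between hb
  obtain ⟨K, hK⟩ := exists_log_heatSeries_le hH_anti hH_pos hD_pos hH hD hγ
    ((div_pos hβ hγ).trans hs) hs
  have hup : Tendsto (fun t => K * (-log t)⁻¹ + s) (𝓝[>] 0) (𝓝 s) := by
    simpa using ((tendsto_inv_atTop_zero.comp hS).const_mul K).add_const s
  filter_upwards [self_mem_nhdsWithin, hS.eventually_gt_atTop 0, hup.eventually_lt_const hsb]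
    with t ht hS0 htb
  have ht1 : t ≤ 1 := ((log_neg_iff ht).1 (neg_pos.1 hS0)).le
  refine lt_of_le_of_lt ?_ htb
  rw [div_le_iff₀ hS0, add_mul, inv_mul_cancel_right₀ hS0.ne']
  exact hK t ht ht1

theorem tendsto_log_heatSeries_div_log (hH_anti : Antitone H) (hH0 : H 0 = 1)
    (hH_pos : ∀ n, 0 < H n) (hD_anti : Antitone D) (hD_pos : ∀ n, 0 < D n)
    (hH : Tendsto (fun n : ℕ => log (H n) / n) atTop (𝓝 (-β)))
    (hD : Tendsto (fun n : ℕ => log (D n) / n) atTop (𝓝 (-γ))) (hβ : 0 < β) (hγ : 0 < γ) :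
    Tendsto (fun t => log (heatSeries H D t) / log t) (𝓝[>] 0) (𝓝 (-(β / γ))) := by
  suffices Tendsto (fun t => log (heatSeries H D t) / -log t) (𝓝[>] 0) (𝓝 (β / γ)) by
    simpa only [div_neg, neg_neg] using this.neg
  exact tendsto_order.2
    ⟨fun a ha => eventually_lt_log_heatSeries_div_neg_log hH_anti hH0 hH_pos hD_anti hD_pos
      hH hD hβ hγ ha,
    fun b hb => eventually_log_heatSeries_div_neg_log_lt hH_anti hH_pos hD_pos hH hD hβ hγ hb⟩

end HeatSeries

/-- On-diagonal heat kernel asymptotics (eq. (1.2) of Theorem 1.1, sequence form):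
the series defining `p(t)` converges for every `t > 0`, and
`lim_{t→0+} log p(t) / log t = -β/(β - L)`. -/
theorem stmt0 (H D R : ℕ → ℝ) (β L : ℝ)
    (hH_anti : Antitone H) (hH0 : H 0 = 1) (hH_pos : ∀ n, 0 < H n)
    (hD_anti : StrictAnti D) (hD_pos : ∀ n, 0 < D n)
    (hR_pos : ∀ n, 0 < R n) (hDHR : ∀ n, D n = H n * R n)
    (hβ : β > max 0 L)
    (hHlim : Tendsto (fun n : ℕ => Real.log (H n) / n) atTop (nhds (-β)))
    (hRlim : Tendsto (fun n : ℕ => Real.log (R n) / n) atTop (nhds L)) :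
    (∀ t : ℝ, 0 < t →
      Summable (fun n : ℕ => (1 / H (n + 1) - 1 / H n) * Real.exp (-t / D n))) ∧
    Tendsto
      (fun t : ℝ =>
        Real.log (1 + ∑' n : ℕ, (1 / H (n + 1) - 1 / H n) * Real.exp (-t / D n)) /
          Real.log t)
      (nhdsWithin 0 (Ioi 0)) (nhds (-(β / (β - L)))) := by
  have hβ0 : 0 < β := (le_max_left 0 L).trans_lt hβ
  have hγ : 0 < β - L := sub_pos.2 ((le_max_right 0 L).trans_lt hβ)
  have hDlim : Tendsto (fun n : ℕ => log (D n) / n) atTop (𝓝 (-(β - L))) := by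
    rw [show -(β - L) = -β + L by ring]
    refine (hHlim.add hRlim).congr fun n => ?_
    rw [hDHR n, log_mul (hH_pos n).ne' (hR_pos n).ne', add_div]
  exact ⟨fun t ht => summable_heatTerm hH_anti hH_pos hD_pos hHlim hDlim hγ ht,
    tendsto_log_heatSeries_div_log hH_anti hH0 hH_pos hD_anti.antitone hD_pos hHlim hDlim hβ0 hγ⟩
end

section
/- Under these hypotheses, for every t > 0 the series defining p(t) converges, D n → 0 so for t ∈ (0, D 0] the number l(t) := min{n ∈ ℕ : D n < t} is well defined, and lim_{t→0+} (log p(t))/l(t) = β. (This is the intermediate asymptotic established via (4.7) in the proof of Theorem 1.1.) -/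
/-!
Write `l = l(t)`. For `n < l` we have `t ≤ D n`, so `exp (-t / D n) ≥ e⁻¹` and the partial
sum telescopes: `p(t) ≥ e⁻¹ / H l`. For `n ≥ l` we use `exp (-x) ≤ k! / x ^ k` together
with `D l < t`: `p(t) ≤ 1 / H l + k! D(l)⁻ᵏ ∑_{n ≥ l} D(n)ᵏ / H(n + 1)`.
Now `1 / H` grows at exponential rate `β` and `D` decays at rate `β - L > 0`; choosing
`k (β - L) > β`, the summands `D(n)ᵏ / H(n + 1)` decay exponentially, their tails decay at the
same rate, and both bounds on `p(t)` grow at rate exactly `β` in `l`. Finally `l(t) → ∞` as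
`t → 0+`.
-/

open Filter Set Topology Real
open scoped Nat

def HasExpGrowthRate (u : ℕ → ℝ) (a : ℝ) : Prop :=
  Tendsto (fun n : ℕ => log (u n) / n) atTop (𝓝 a)

lemma hasExpGrowthRate_const (c : ℝ) : HasExpGrowthRate (fun _ => c) 0 :=
  tendsto_const_div_atTop_nhds_zero_nat (log c)

namespace HasExpGrowthRate

variable {u v : ℕ → ℝ} {a b : ℝ}

lemma mul (hu : HasExpGrowthRate u a) (hv : HasExpGrowthRate v b) (hu0 : ∀ n, u n ≠ 0)
    (hv0 : ∀ n, v n ≠ 0) : HasExpGrowthRate (fun n => u n * v n) (a + b) := by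
  simpa only [HasExpGrowthRate, log_mul (hu0 _) (hv0 _), add_div] using hu.add hv

lemma inv (hu : HasExpGrowthRate u a) : HasExpGrowthRate (fun n => (u n)⁻¹) (-a) := by
  simpa only [HasExpGrowthRate, log_inv, neg_div] using hu.neg

lemma pow (hu : HasExpGrowthRate u a) (k : ℕ) : HasExpGrowthRate (fun n => u n ^ k) (k * a) := by
  simpa only [HasExpGrowthRate, log_pow, mul_div_assoc] using hu.const_mul (k : ℝ)

lemma comp_add_one (hu : HasExpGrowthRate u a) : HasExpGrowthRate (fun n => u (n + 1)) a := by
  have hshift : Tendsto (fun n : ℕ => log (u (n + 1)) / (n + 1 : ℕ)) atTop (𝓝 a) :=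
    (tendsto_add_atTop_iff_nat 1).2 hu
  have hsum := hshift.add (hshift.div_atTop tendsto_natCast_atTop_atTop)
  rw [add_zero] at hsum
  refine hsum.congr' ?_
  filter_upwards [eventually_ne_atTop 0] with n hn
  have hn' : (n : ℝ) ≠ 0 := Nat.cast_ne_zero.2 hn
  push_cast
  field_simp

lemma add (hu : HasExpGrowthRate u a) (hv : HasExpGrowthRate v a) (hu0 : ∀ n, 0 < u n)
    (hv0 : ∀ n, 0 < v n) : HasExpGrowthRate (fun n => u n + v n) a := by
  have hupper : Tendsto (fun n : ℕ => log 2 / n + max (log (u n) / n) (log (v n) / n))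
      atTop (𝓝 a) := by
    simpa using (tendsto_const_div_atTop_nhds_zero_nat (log 2)).add (hu.max hv)
  refine tendsto_of_tendsto_of_tendsto_of_le_of_le hu hupper (fun n => ?_) (fun n => ?_)
  · exact div_le_div_of_nonneg_right (log_le_log (hu0 n) (by linarith [hv0 n])) n.cast_nonneg
  · have hmax : u n + v n ≤ 2 * max (u n) (v n) := by
      linarith [le_max_left (u n) (v n), le_max_right (u n) (v n)]
    have hlogmax : log (max (u n) (v n)) ≤ max (log (u n)) (log (v n)) := by
      rcases max_choice (u n) (v n) with h | h <;> rw [h] <;> simp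
    have hlog : log (u n + v n) ≤ log 2 + max (log (u n)) (log (v n)) :=
      calc log (u n + v n) ≤ log (2 * max (u n) (v n)) :=
            log_le_log (add_pos (hu0 n) (hv0 n)) hmax
        _ = log 2 + log (max (u n) (v n)) :=
            log_mul two_ne_zero (lt_max_of_lt_left (hu0 n)).ne'
        _ ≤ log 2 + max (log (u n)) (log (v n)) := by gcongr
    rw [max_div_div_right n.cast_nonneg, ← add_div]
    exact div_le_div_of_nonneg_right hlog n.cast_nonneg

lemma eventually_le_exp (hu : HasExpGrowthRate u a) (hpos : ∀ n, 0 < u n) (hab : a < b) :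
    ∀ᶠ n : ℕ in atTop, u n ≤ exp (b * n) := by
  filter_upwards [hu.eventually (gt_mem_nhds hab), eventually_gt_atTop 0] with n hn hn0
  rw [div_lt_iff₀ (Nat.cast_pos.2 hn0)] at hn
  calc u n = exp (log (u n)) := (exp_log (hpos n)).symm
    _ ≤ exp (b * n) := exp_le_exp.2 hn.le

lemma summable (hu : HasExpGrowthRate u a) (hpos : ∀ n, 0 < u n) (ha : a < 0) : Summable u := by
  refine Summable.of_norm_bounded_eventually_nat
    (Real.summable_exp_nat_mul_iff.2 (by linarith : a / 2 < 0)) ?_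
  filter_upwards [hu.eventually_le_exp hpos (by linarith : a < a / 2)] with n hn
  rw [Real.norm_of_nonneg (hpos n).le, mul_comm]
  exact hn

lemma tsum_nat_add (hu : HasExpGrowthRate u a) (hpos : ∀ n, 0 < u n) (ha : a < 0) :
    HasExpGrowthRate (fun l => ∑' n, u (n + l)) a := by
  have hs := hu.summable hpos ha
  have htail_pos (l : ℕ) : 0 < ∑' n, u (n + l) :=
    ((summable_nat_add_iff l).2 hs).tsum_pos (fun n => (hpos _).le) 0 (hpos _)
  refine tendsto_order.2 ⟨fun b hb => ?_, fun b hb => ?_⟩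
  · filter_upwards [hu.eventually (lt_mem_nhds hb)] with l hl
    have hle : u l ≤ ∑' n, u (n + l) := by
      simpa using ((summable_nat_add_iff l).2 hs).le_tsum 0 (fun j _ => (hpos _).le)
    exact hl.trans_le (div_le_div_of_nonneg_right (log_le_log (hpos l) hle) l.cast_nonneg)
  · obtain ⟨c, hac, hc⟩ := exists_between (lt_min hb ha)
    have hq : exp c < 1 := exp_lt_one_iff.2 (hc.trans_le (min_le_right b 0))
    obtain ⟨N, hN⟩ := eventually_atTop.1 (hu.eventually_le_exp hpos hac)
    set C := log (1 - exp c)⁻¹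
    have hlim : Tendsto (fun l : ℕ => c + C / l) atTop (𝓝 c) := by
      simpa using tendsto_const_nhds.add (tendsto_const_div_atTop_nhds_zero_nat C)
    filter_upwards [hlim.eventually (gt_mem_nhds (hc.trans_le (min_le_left b 0))),
      eventually_ge_atTop N, eventually_gt_atTop 0] with l hl hlN hl0
    refine lt_of_le_of_lt ?_ hl
    have htail : ∑' n, u (n + l) ≤ exp (c * l) * (1 - exp c)⁻¹ := by
      rw [← tsum_geometric_of_lt_one (exp_nonneg c) hq, ← tsum_mul_left]
      refine ((summable_nat_add_iff l).2 hs).tsum_le_tsum (fun n => ?_)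
        ((summable_geometric_of_lt_one (exp_nonneg c) hq).mul_left _)
      calc u (n + l) ≤ exp (c * (n + l : ℕ)) := hN _ (by omega)
        _ = exp (c * l) * exp c ^ n := by rw [← exp_nat_mul, ← exp_add]; push_cast; ring_nf
    have hl' : (0 : ℝ) < l := Nat.cast_pos.2 hl0
    rw [div_le_iff₀ hl', add_mul, div_mul_cancel₀ _ hl'.ne']
    calc log (∑' n, u (n + l)) ≤ log (exp (c * l) * (1 - exp c)⁻¹) :=
          log_le_log (htail_pos l) htail
      _ = c * l + C := by
        rw [log_mul (exp_ne_zero _) (inv_ne_zero (sub_ne_zero.2 hq.ne')), log_exp]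

end HasExpGrowthRate

lemma exp_neg_le_factorial_div_pow {x : ℝ} (hx : 0 < x) (k : ℕ) :
    exp (-x) ≤ k ! / x ^ k := by
  rw [exp_neg, ← inv_div]
  exact inv_anti₀ (by positivity) (pow_div_factorial_le_exp _ hx.le k)

noncomputable def heatKernelDiag (H D : ℕ → ℝ) (t : ℝ) : ℝ :=
  1 + ∑' n : ℕ, (1 / H (n + 1) - 1 / H n) * exp (-t / D n)

/-- The `l(t)` of the paper; it is `0` when no `D n` lies below `t`. -/
noncomputable def firstIndexBelow (D : ℕ → ℝ) (t : ℝ) : ℕ :=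
  sInf {n : ℕ | D n < t}

section HeatKernel

variable {H D : ℕ → ℝ} {t : ℝ}

lemma sum_range_one_div_sub (hH0 : H 0 = 1) (N : ℕ) :
    ∑ n ∈ Finset.range N, (1 / H (n + 1) - 1 / H n) = 1 / H N - 1 := by
  rw [Finset.sum_range_sub (fun n => 1 / H n), hH0, div_one]

lemma one_div_sub_nonneg (hH : Antitone H) (hH_pos : ∀ n, 0 < H n) (n : ℕ) :
    0 ≤ 1 / H (n + 1) - 1 / H n :=
  sub_nonneg.2 (one_div_le_one_div_of_le (hH_pos _) (hH n.le_succ))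

lemma one_div_sub_mul_exp_le (hH_pos : ∀ n, 0 < H n) (hD_pos : ∀ n, 0 < D n)
    (ht : 0 < t) (k n : ℕ) :
    (1 / H (n + 1) - 1 / H n) * exp (-t / D n) ≤ k ! / t ^ k * (D n ^ k * (H (n + 1))⁻¹) := by
  have hD_pos' := hD_pos n
  calc (1 / H (n + 1) - 1 / H n) * exp (-t / D n)
      ≤ (H (n + 1))⁻¹ * (k ! / (t / D n) ^ k) := by
        rw [neg_div]
        exact mul_le_mul ((sub_le_self _ (one_div_pos.2 (hH_pos n)).le).trans_eq (one_div _))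
          (exp_neg_le_factorial_div_pow (by positivity) k) (exp_nonneg _) (inv_pos.2 (hH_pos _)).le
    _ = k ! / t ^ k * (D n ^ k * (H (n + 1))⁻¹) := by
        rw [div_pow]; field_simp

lemma exists_hasExpGrowthRate_pow_mul_inv {a β : ℝ} (hH_pos : ∀ n, 0 < H n)
    (hD_pos : ∀ n, 0 < D n) (hH_inv : HasExpGrowthRate (fun n => (H n)⁻¹) β)
    (hD : HasExpGrowthRate D a) (ha : a < 0) :
    ∃ k : ℕ, HasExpGrowthRate (fun n => D n ^ k * (H (n + 1))⁻¹) (k * a + β) ∧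
      k * a + β < 0 := by
  obtain ⟨k, hk⟩ := exists_nat_gt (β / -a)
  refine ⟨k, (hD.pow k).mul hH_inv.comp_add_one (fun n => (pow_pos (hD_pos n) k).ne')
    (fun n => (inv_pos.2 (hH_pos _)).ne'), ?_⟩
  rw [div_lt_iff₀ (neg_pos.2 ha)] at hk
  linarith

lemma summable_one_div_sub_mul_exp (hH : Antitone H) (hH_pos : ∀ n, 0 < H n)
    (hD_pos : ∀ n, 0 < D n) (ht : 0 < t) {k : ℕ}
    (hs : Summable fun n => D n ^ k * (H (n + 1))⁻¹) :
    Summable fun n => (1 / H (n + 1) - 1 / H n) * exp (-t / D n) :=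
  (hs.mul_left _).of_nonneg_of_le
    (fun n => mul_nonneg (one_div_sub_nonneg hH hH_pos n) (exp_nonneg _))
    (one_div_sub_mul_exp_le hH_pos hD_pos ht k)

lemma exp_neg_one_mul_inv_le_heatKernelDiag (hH : Antitone H) (hH0 : H 0 = 1)
    (hH_pos : ∀ n, 0 < H n) (hD_pos : ∀ n, 0 < D n)
    (hs : Summable fun n => (1 / H (n + 1) - 1 / H n) * exp (-t / D n)) :
    exp (-1) * (H (firstIndexBelow D t))⁻¹ ≤ heatKernelDiag H D t := by
  set l := firstIndexBelow D t
  have hhead : exp (-1) * (1 / H l - 1) ≤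
      ∑ n ∈ Finset.range l, (1 / H (n + 1) - 1 / H n) * exp (-t / D n) := by
    rw [← sum_range_one_div_sub hH0, Finset.mul_sum]
    refine Finset.sum_le_sum fun n hn => ?_
    have htD : t ≤ D n := not_lt.1 (Nat.notMem_of_lt_sInf (Finset.mem_range.1 hn))
    rw [mul_comm]
    gcongr
    · exact one_div_sub_nonneg hH hH_pos n
    · rw [neg_div, neg_le_neg_iff, div_le_one (hD_pos n)]
      exact htD
  have hle := hs.sum_le_tsum (Finset.range l)
    (fun n _ => mul_nonneg (one_div_sub_nonneg hH hH_pos n) (exp_nonneg _))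
  have hexp : exp (-1) ≤ 1 := exp_le_one_iff.2 (by norm_num)
  rw [heatKernelDiag, ← one_div]
  nlinarith

lemma heatKernelDiag_le (hH : Antitone H) (hH0 : H 0 = 1) (hH_pos : ∀ n, 0 < H n)
    (hD_pos : ∀ n, 0 < D n) (hDt : D (firstIndexBelow D t) < t) {k : ℕ}
    (hs : Summable fun n => D n ^ k * (H (n + 1))⁻¹) :
    heatKernelDiag H D t ≤ (H (firstIndexBelow D t))⁻¹ +
      k ! * ((D (firstIndexBelow D t) ^ k)⁻¹ *
        ∑' n, D (n + firstIndexBelow D t) ^ k * (H (n + firstIndexBelow D t + 1))⁻¹) := by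
  set l := firstIndexBelow D t
  have ht : 0 < t := (hD_pos l).trans hDt
  have hsum := summable_one_div_sub_mul_exp hH hH_pos hD_pos ht hs
  have hhead : ∑ n ∈ Finset.range l, (1 / H (n + 1) - 1 / H n) * exp (-t / D n) ≤
      1 / H l - 1 := by
    rw [← sum_range_one_div_sub hH0]
    refine Finset.sum_le_sum fun n _ =>
      mul_le_of_le_one_right (one_div_sub_nonneg hH hH_pos n) ?_
    exact exp_le_one_iff.2 (div_nonpos_of_nonpos_of_nonneg (neg_nonpos.2 ht.le) (hD_pos n).le)
  have htail : ∑' n, (1 / H (n + l + 1) - 1 / H (n + l)) * exp (-t / D (n + l)) ≤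
      k ! * ((D l ^ k)⁻¹ * ∑' n, D (n + l) ^ k * (H (n + l + 1))⁻¹) := by
    calc _ ≤ ∑' n, k ! / t ^ k * (D (n + l) ^ k * (H (n + l + 1))⁻¹) :=
          ((summable_nat_add_iff l).2 hsum).tsum_le_tsum
            (fun n => one_div_sub_mul_exp_le hH_pos hD_pos ht k (n + l))
            (((summable_nat_add_iff l).2 hs).mul_left _)
      _ ≤ k ! / D l ^ k * ∑' n, D (n + l) ^ k * (H (n + l + 1))⁻¹ := by
          rw [tsum_mul_left]
          have := hD_pos l
          gcongr
          exact tsum_nonneg fun n =>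
            mul_nonneg (pow_nonneg (hD_pos _).le k) (inv_pos.2 (hH_pos _)).le
      _ = _ := by ring
  rw [heatKernelDiag, ← hsum.sum_add_tsum_nat_add l, ← one_div]
  linarith

lemma apply_firstIndexBelow_lt (hD_lim : Tendsto D atTop (𝓝 0)) (ht : 0 < t) :
    D (firstIndexBelow D t) < t :=
  Nat.sInf_mem (hD_lim.eventually (gt_mem_nhds ht)).exists

lemma tendsto_firstIndexBelow (hD : StrictAnti D) (hD_pos : ∀ n, 0 < D n)
    (hD_lim : Tendsto D atTop (𝓝 0)) : Tendsto (firstIndexBelow D) (𝓝[>] 0) atTop := by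
  refine tendsto_atTop.2 fun N => ?_
  filter_upwards [Ioo_mem_nhdsGT (hD_pos N)] with t ⟨ht, htN⟩
  exact (hD.lt_iff_gt.1 ((apply_firstIndexBelow_lt hD_lim ht).trans htN)).le

lemma hasExpGrowthRate_inv_add_factorial_mul_tsum {a β : ℝ} (hH_pos : ∀ n, 0 < H n)
    (hD_pos : ∀ n, 0 < D n) (hH_inv : HasExpGrowthRate (fun n => (H n)⁻¹) β)
    (hD_rate : HasExpGrowthRate D a) {k : ℕ}
    (hv : HasExpGrowthRate (fun n => D n ^ k * (H (n + 1))⁻¹) (k * a + β))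
    (hv_neg : k * a + β < 0) :
    HasExpGrowthRate (fun l => (H l)⁻¹ +
      k ! * ((D l ^ k)⁻¹ * ∑' n, D (n + l) ^ k * (H (n + l + 1))⁻¹)) β := by
  have hv_pos (n : ℕ) : 0 < D n ^ k * (H (n + 1))⁻¹ :=
    mul_pos (pow_pos (hD_pos n) k) (inv_pos.2 (hH_pos _))
  have hT_pos (l : ℕ) : 0 < ∑' n, D (n + l) ^ k * (H (n + l + 1))⁻¹ :=
    ((summable_nat_add_iff l).2 (hv.summable hv_pos hv_neg)).tsum_pos
      (fun n => (hv_pos _).le) 0 (hv_pos _)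
  have hDT_pos (l : ℕ) : 0 < (D l ^ k)⁻¹ * ∑' n, D (n + l) ^ k * (H (n + l + 1))⁻¹ :=
    mul_pos (inv_pos.2 (pow_pos (hD_pos l) k)) (hT_pos l)
  have hDT := (hD_rate.pow k).inv.mul (hv.tsum_nat_add hv_pos hv_neg)
    (fun l => (inv_pos.2 (pow_pos (hD_pos l) k)).ne') (fun l => (hT_pos l).ne')
  refine hH_inv.add ?_ (fun l => inv_pos.2 (hH_pos l))
    (fun l => mul_pos (by positivity) (hDT_pos l))
  convert (hasExpGrowthRate_const _).mul hDT (fun _ => Nat.cast_ne_zero.2 k.factorial_ne_zero)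
    (fun l => (hDT_pos l).ne') using 1
  ring

theorem tendsto_log_heatKernelDiag_div_firstIndexBelow {a β : ℝ} (hH : Antitone H)
    (hH0 : H 0 = 1) (hH_pos : ∀ n, 0 < H n) (hD : StrictAnti D) (hD_pos : ∀ n, 0 < D n)
    (hH_inv : HasExpGrowthRate (fun n => (H n)⁻¹) β) (hD_rate : HasExpGrowthRate D a)
    (ha : a < 0) :
    Tendsto (fun t => log (heatKernelDiag H D t) / firstIndexBelow D t) (𝓝[>] 0) (𝓝 β) := by
  have hD_lim : Tendsto D atTop (𝓝 0) := (hD_rate.summable hD_pos ha).tendsto_atTop_zero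
  obtain ⟨k, hv, hv_neg⟩ := exists_hasExpGrowthRate_pow_mul_inv hH_pos hD_pos hH_inv hD_rate ha
  have hv_sum :=
    hv.summable (fun n => mul_pos (pow_pos (hD_pos n) k) (inv_pos.2 (hH_pos _))) hv_neg
  have hlower : HasExpGrowthRate (fun l => exp (-1) * (H l)⁻¹) β := by
    simpa using (hasExpGrowthRate_const _).mul hH_inv (fun _ => exp_ne_zero _)
      (fun n => (inv_pos.2 (hH_pos n)).ne')
  have hupper := hasExpGrowthRate_inv_add_factorial_mul_tsum hH_pos hD_pos hH_inv hD_rate hv hv_neg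
  have hlower_pos (t : ℝ) : 0 < exp (-1) * (H (firstIndexBelow D t))⁻¹ :=
    mul_pos (exp_pos _) (inv_pos.2 (hH_pos _))
  have hlower_le (t : ℝ) (ht : 0 < t) := exp_neg_one_mul_inv_le_heatKernelDiag hH hH0 hH_pos
    hD_pos (summable_one_div_sub_mul_exp hH hH_pos hD_pos ht hv_sum)
  have hl := tendsto_firstIndexBelow hD hD_pos hD_lim
  refine tendsto_of_tendsto_of_tendsto_of_le_of_le' (Tendsto.comp hlower hl)
      (Tendsto.comp hupper hl) ?_ ?_ <;>
    filter_upwards [self_mem_nhdsWithin] with t (ht : 0 < t) <;>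
    refine div_le_div_of_nonneg_right (log_le_log ?_ ?_) (Nat.cast_nonneg _)
  exacts [hlower_pos t, hlower_le t ht, (hlower_pos t).trans_le (hlower_le t ht),
    heatKernelDiag_le hH hH0 hH_pos hD_pos (apply_firstIndexBelow_lt hD_lim ht) hv_sum]

end HeatKernel

/-- intermediate asymptotic (4.7) in the proof of Theorem 1.1: the series
defining `p(t)` converges for every `t > 0`, `D n → 0` so that
`l(t) := min{n : D n < t}` is well defined for `0 < t ≤ D 0`, and
`lim_{t→0+} log p(t) / l(t) = β`. -/
theorem stmt5 (H D R : ℕ → ℝ) (β L : ℝ)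
    (hH_anti : Antitone H) (hH0 : H 0 = 1) (hH_pos : ∀ n, 0 < H n)
    (hD_anti : StrictAnti D) (hD_pos : ∀ n, 0 < D n)
    (hR_pos : ∀ n, 0 < R n) (hDHR : ∀ n, D n = H n * R n)
    (hβ : β > max 0 L)
    (hHlim : Tendsto (fun n : ℕ => Real.log (H n) / n) atTop (nhds (-β)))
    (hRlim : Tendsto (fun n : ℕ => Real.log (R n) / n) atTop (nhds L)) :
    (∀ t : ℝ, 0 < t →
      Summable (fun n : ℕ => (1 / H (n + 1) - 1 / H n) * Real.exp (-t / D n))) ∧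
    Tendsto D atTop (nhds 0) ∧
    (∀ t : ℝ, 0 < t → {n : ℕ | D n < t}.Nonempty) ∧
    Tendsto
      (fun t : ℝ =>
        Real.log (1 + ∑' n : ℕ, (1 / H (n + 1) - 1 / H n) * Real.exp (-t / D n)) /
          ((sInf {n : ℕ | D n < t} : ℕ) : ℝ))
      (nhdsWithin 0 (Ioi 0)) (nhds β) := by
  have hH_inv : HasExpGrowthRate (fun n => (H n)⁻¹) β := by
    simpa using HasExpGrowthRate.inv hHlim
  have hD : HasExpGrowthRate D (-β + L) := by
    simpa only [← hDHR] using HasExpGrowthRate.mul hHlim hRlim (fun n => (hH_pos n).ne')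
      (fun n => (hR_pos n).ne')
  have hD_neg : -β + L < 0 := by linarith [le_max_right 0 L]
  have hD_lim : Tendsto D atTop (𝓝 0) := (hD.summable hD_pos hD_neg).tendsto_atTop_zero
  obtain ⟨k, hv, hv_neg⟩ := exists_hasExpGrowthRate_pow_mul_inv hH_pos hD_pos hH_inv hD hD_neg
  refine ⟨fun t ht => summable_one_div_sub_mul_exp hH_anti hH_pos hD_pos ht
      (hv.summable (fun n => mul_pos (pow_pos (hD_pos n) k) (inv_pos.2 (hH_pos _))) hv_neg),
    hD_lim, fun t ht => ⟨_, apply_firstIndexBelow_lt hD_lim ht⟩, ?_⟩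
  exact tendsto_log_heatKernelDiag_div_firstIndexBelow hH_anti hH0 hH_pos hD_anti hD_pos
    hH_inv hD hD_neg
end

section
/- Under these hypotheses, for every δ > 0 there exists a constant C > 0 such that for every l ∈ ℕ: ∑_{n=l}^∞ (H(l)/H(n+1))·exp(−D(l)/D(n)) ≤ C·e^{δl}. (This is the tail estimate (4.3)–(4.5) in the proof of Theorem 1.1, controlling the tail of the on-diagonal heat kernel beyond level l.) -/
open Filter Set

private lemma lin_bound (f : ℕ → ℝ) (c ε : ℝ) (hε : 0 < ε)
    (h : Tendsto (fun n : ℕ => f n / n) atTop (nhds c)) :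
    ∃ M : ℝ, 0 ≤ M ∧ ∀ n : ℕ, |f n - c * n| ≤ M + ε * n := by
  obtain ⟨n0, hn0⟩ := (Metric.tendsto_atTop.mp h) ε hε
  refine ⟨∑ i ∈ Finset.range (max n0 1), |f i - c * i|,
    Finset.sum_nonneg (fun _ _ => abs_nonneg _), ?_⟩
  intro n
  by_cases hn : n < max n0 1
  · have h1 : |f n - c * n| ≤ ∑ i ∈ Finset.range (max n0 1), |f i - c * i| :=
      Finset.single_le_sum (f := fun i : ℕ => |f i - c * i|) (fun i _ => abs_nonneg _)
        (Finset.mem_range.mpr hn)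
    have h2 : (0:ℝ) ≤ ε * n := mul_nonneg hε.le (Nat.cast_nonneg n)
    linarith
  · push_neg at hn
    have h1 : 1 ≤ n := le_trans (le_max_right _ _) hn
    have h0 : n0 ≤ n := le_trans (le_max_left _ _) hn
    have hd := hn0 n h0
    rw [Real.dist_eq] at hd
    have hnpos : (0:ℝ) < n := by exact_mod_cast h1
    have heq : f n - c * n = (f n / n - c) * n := by field_simp
    have : |f n - c * n| = |f n / n - c| * n := by
      rw [heq, abs_mul, abs_of_pos hnpos]
    rw [this]
    have h3 : |f n / n - c| * n ≤ ε * n :=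
      mul_le_mul_of_nonneg_right hd.le hnpos.le
    have h4 : (0:ℝ) ≤ ∑ i ∈ Finset.range (max n0 1), |f i - c * i| :=
      Finset.sum_nonneg (fun _ _ => abs_nonneg _)
    linarith

set_option maxHeartbeats 1000000 in
/-- tail estimate (4.3)–(4.5) in the proof of Theorem 1.1: for every `δ > 0`
there is `C > 0` such that for every `l`,
`∑_{n=l}^∞ (H(l)/H(n+1))·exp(−D(l)/D(n)) ≤ C·e^{δl}`. -/
theorem stmt6 (H D R : ℕ → ℝ) (β L : ℝ)
    (hH_anti : Antitone H) (hH0 : H 0 = 1) (hH_pos : ∀ n, 0 < H n)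
    (hD_anti : StrictAnti D) (hD_pos : ∀ n, 0 < D n)
    (hR_pos : ∀ n, 0 < R n) (hDHR : ∀ n, D n = H n * R n)
    (hβ : β > max 0 L)
    (hHlim : Tendsto (fun n : ℕ => Real.log (H n) / n) atTop (nhds (-β)))
    (hRlim : Tendsto (fun n : ℕ => Real.log (R n) / n) atTop (nhds L)) :
    ∀ δ : ℝ, 0 < δ → ∃ C : ℝ, 0 < C ∧ ∀ l : ℕ,
      Summable (fun k : ℕ => (H l / H (l + k + 1)) * Real.exp (-(D l / D (l + k)))) ∧
      ∑' k : ℕ, (H l / H (l + k + 1)) * Real.exp (-(D l / D (l + k))) ≤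
        C * Real.exp (δ * l) := by
  intro δ hδ
  have hβ0 : 0 < β := lt_of_le_of_lt (le_max_left 0 L) hβ
  have hγ : 0 < β - L := sub_pos.mpr (lt_of_le_of_lt (le_max_right 0 L) hβ)
  set γ := β - L with hγdef
  set N : ℕ := ⌈2 * (β + 2) / γ⌉₊ with hNdef
  have hN : 2 * (β + 2) / γ ≤ N := Nat.le_ceil _
  have hNcast : (0:ℝ) ≤ (N:ℝ) := Nat.cast_nonneg N
  have hNγ : β + 2 ≤ γ * N / 2 := by
    rw [div_le_iff₀ hγ] at hN; nlinarith
  have hden : (0:ℝ) < 4 * N + 2 := by positivity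
  set ε := min (γ / 4) (min 1 (δ / (4 * N + 2))) with hεdef
  have hε : 0 < ε := lt_min (by positivity) (lt_min one_pos (by positivity))
  have hε1 : ε ≤ 1 := le_trans (min_le_right _ _) (min_le_left _ _)
  have hεγ : ε ≤ γ / 4 := min_le_left _ _
  have hεδ : ε ≤ δ / (4 * N + 2) := le_trans (min_le_right _ _) (min_le_right _ _)
  obtain ⟨M1, hM1nn, hM1⟩ := lin_bound (fun n => Real.log (H n)) (-β) ε hε hHlim
  obtain ⟨M2, hM2nn, hM2⟩ := lin_bound (fun n => Real.log (R n)) L ε hε hRlim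
  set M := max M1 M2 with hMdef
  have hM1M : M1 ≤ M := le_max_left _ _
  have hM2M : M2 ≤ M := le_max_right _ _
  have hMnn : 0 ≤ M := le_trans hM1nn hM1M
  -- pointwise bounds on log H n and log R n
  have hHup : ∀ n : ℕ, Real.log (H n) ≤ -β * n + M + ε * n := by
    intro n; have := (abs_le.mp (hM1 n)).2; linarith
  have hHlo : ∀ n : ℕ, -β * n - M - ε * n ≤ Real.log (H n) := by
    intro n; have := (abs_le.mp (hM1 n)).1; linarith
  have hRup : ∀ n : ℕ, Real.log (R n) ≤ L * n + M + ε * n := by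
    intro n; have := (abs_le.mp (hM2 n)).2; linarith
  have hRlo : ∀ n : ℕ, L * n - M - ε * n ≤ Real.log (R n) := by
    intro n; have := (abs_le.mp (hM2 n)).1; linarith
  refine ⟨2 * (Nat.factorial N : ℝ) * Real.exp (β + 2 * M + ε + 4 * M * N), by positivity, ?_⟩
  intro l
  -- key pointwise bound on the terms
  have hterm : ∀ k : ℕ, (H l / H (l + k + 1)) * Real.exp (-(D l / D (l + k))) ≤
      ((Nat.factorial N : ℝ) * Real.exp (β + 2 * M + ε + 4 * M * N + (2 + 4 * N) * ε * l)) *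
        Real.exp (-1 : ℝ) ^ k := by
    intro k
    have e1 : H l / H (l + k + 1) =
        Real.exp (Real.log (H l) - Real.log (H (l + k + 1))) := by
      rw [Real.exp_sub, Real.exp_log (hH_pos _), Real.exp_log (hH_pos _)]
    have e2 : D l / D (l + k) = Real.exp (Real.log (D l) - Real.log (D (l + k))) := by
      rw [Real.exp_sub, Real.exp_log (hD_pos _), Real.exp_log (hD_pos _)]
    have hlogD : ∀ n : ℕ, Real.log (D n) = Real.log (H n) + Real.log (R n) := by
      intro n; rw [hDHR n, Real.log_mul (hH_pos n).ne' (hR_pos n).ne']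
    set u := Real.log (H l) - Real.log (H (l + k + 1)) with hu_def
    set v := Real.log (D l) - Real.log (D (l + k)) with hv_def
    have hu : u ≤ β * (k + 1) + 2 * M + ε * (2 * l + k + 1) := by
      have h1 := hHup l
      have h2 := hHlo (l + k + 1)
      rw [hu_def]
      push_cast at h1 h2 ⊢
      linarith
    have hv : (γ - 2 * ε) * k - 4 * M - 4 * ε * l ≤ v := by
      have h1 := hHlo l
      have h2 := hRlo l
      have h3 := hHup (l + k)
      have h4 := hRup (l + k)
      rw [hv_def, hlogD, hlogD]
      rw [hγdef]
      push_cast at h1 h2 h3 h4 ⊢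
      linarith
    set V : ℝ := (γ - 2 * ε) * k - 4 * M - 4 * ε * l with hVdef
    -- exp(-exp v) ≤ exp(-exp V) ≤ N! * exp(-N*V)
    have hstep1 : Real.exp (-(D l / D (l + k))) ≤ Real.exp (-(Real.exp V)) := by
      rw [e2]
      exact Real.exp_le_exp.mpr (neg_le_neg (Real.exp_le_exp.mpr hv))
    have hpow : Real.exp V ^ N / (Nat.factorial N : ℝ) ≤ Real.exp (Real.exp V) := by
      calc Real.exp V ^ N / (Nat.factorial N : ℝ)
          ≤ ∑ i ∈ Finset.range (N + 1), Real.exp V ^ i / (Nat.factorial i : ℝ) := by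
            exact Finset.single_le_sum (f := fun i : ℕ => Real.exp V ^ i / (Nat.factorial i : ℝ))
              (fun i _ => by positivity) (Finset.self_mem_range_succ N)
        _ ≤ Real.exp (Real.exp V) := Real.sum_le_exp_of_nonneg (Real.exp_pos V).le _
    have hNfac : (0:ℝ) < (Nat.factorial N : ℝ) := by exact_mod_cast Nat.factorial_pos N
    have hstep2 : Real.exp (-(Real.exp V)) ≤ (Nat.factorial N : ℝ) * Real.exp (-(N * V)) := by
      rw [Real.exp_neg, Real.exp_neg]
      have h5 : Real.exp ((N:ℝ) * V) / (Nat.factorial N : ℝ) ≤ Real.exp (Real.exp V) := by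
        rw [Real.exp_nat_mul]; exact hpow
      have h6 : 0 < Real.exp ((N:ℝ) * V) / (Nat.factorial N : ℝ) := by positivity
      calc (Real.exp (Real.exp V))⁻¹ ≤ (Real.exp ((N:ℝ) * V) / (Nat.factorial N : ℝ))⁻¹ :=
            inv_anti₀ h6 h5
        _ = (Nat.factorial N : ℝ) * (Real.exp ((N:ℝ) * V))⁻¹ := by
            rw [inv_div]; ring
    have hcoef : β + ε - (N:ℝ) * (γ - 2 * ε) ≤ -1 := by
      have h7 : ε * N ≤ γ / 4 * N := mul_le_mul_of_nonneg_right hεγ hNcast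
      nlinarith
    have hexpo : β * (k + 1) + 2 * M + ε * (2 * l + k + 1) - (N:ℝ) * V ≤
        β + 2 * M + ε + 4 * M * N + (2 + 4 * N) * ε * l + (-1) * k := by
      have h8 : (β + ε - (N:ℝ) * (γ - 2 * ε)) * k ≤ (-1) * k :=
        mul_le_mul_of_nonneg_right hcoef (Nat.cast_nonneg k)
      rw [hVdef]
      linarith [h8]
    calc (H l / H (l + k + 1)) * Real.exp (-(D l / D (l + k)))
        ≤ Real.exp u * ((Nat.factorial N : ℝ) * Real.exp (-(N * V))) := by
          rw [e1]
          exact mul_le_mul_of_nonneg_left (le_trans hstep1 hstep2) (Real.exp_pos u).le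
      _ = (Nat.factorial N : ℝ) * Real.exp (u - N * V) := by
          rw [show u - (N:ℝ) * V = u + -((N:ℝ) * V) from by ring, Real.exp_add]; ring
      _ ≤ (Nat.factorial N : ℝ) * Real.exp (β + 2 * M + ε + 4 * M * N + (2 + 4 * N) * ε * l + (-1) * k) := by
          refine mul_le_mul_of_nonneg_left (Real.exp_le_exp.mpr ?_) hNfac.le
          have := hu
          linarith [hexpo]
      _ = ((Nat.factorial N : ℝ) * Real.exp (β + 2 * M + ε + 4 * M * N + (2 + 4 * N) * ε * l)) *
            Real.exp (-1 : ℝ) ^ k := by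
          rw [Real.exp_add, show ((-1 : ℝ) * k) = (k : ℝ) * (-1) from by ring,
            Real.exp_nat_mul]
          ring
    -- end hterm
  have hrgeo : Real.exp (-1 : ℝ) < 1 := Real.exp_lt_one_iff.mpr (by norm_num)
  have hsum_geo : Summable (fun k : ℕ =>
      ((Nat.factorial N : ℝ) * Real.exp (β + 2 * M + ε + 4 * M * N + (2 + 4 * N) * ε * l)) *
        Real.exp (-1 : ℝ) ^ k) :=
    (summable_geometric_of_lt_one (Real.exp_pos _).le hrgeo).mul_left _
  have hsum : Summable (fun k : ℕ => (H l / H (l + k + 1)) * Real.exp (-(D l / D (l + k)))) := by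
    refine Summable.of_nonneg_of_le (fun k => ?_) hterm hsum_geo
    have := hH_pos l; have := hH_pos (l + k + 1)
    positivity
  refine ⟨hsum, ?_⟩
  have htsum : ∑' k : ℕ, (H l / H (l + k + 1)) * Real.exp (-(D l / D (l + k))) ≤
      ∑' k : ℕ, ((Nat.factorial N : ℝ) * Real.exp (β + 2 * M + ε + 4 * M * N + (2 + 4 * N) * ε * l)) *
        Real.exp (-1 : ℝ) ^ k :=
    Summable.tsum_le_tsum hterm hsum hsum_geo
  have hgeoval : ∑' k : ℕ, ((Nat.factorial N : ℝ) * Real.exp (β + 2 * M + ε + 4 * M * N + (2 + 4 * N) * ε * l)) *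
      Real.exp (-1 : ℝ) ^ k =
      ((Nat.factorial N : ℝ) * Real.exp (β + 2 * M + ε + 4 * M * N + (2 + 4 * N) * ε * l)) *
        (1 - Real.exp (-1 : ℝ))⁻¹ := by
    rw [tsum_mul_left, tsum_geometric_of_lt_one (Real.exp_pos _).le hrgeo]
  have he2 : Real.exp (-1 : ℝ) ≤ 1 / 2 := by
    rw [Real.exp_neg]
    rw [inv_le_comm₀ (Real.exp_pos 1) (by norm_num)]
    norm_num
    linarith [Real.add_one_le_exp 1]
  have hinv2 : (1 - Real.exp (-1 : ℝ))⁻¹ ≤ 2 := by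
    rw [inv_le_comm₀ (by linarith) (by norm_num)]
    linarith
  have hNfac : (0:ℝ) < (Nat.factorial N : ℝ) := by exact_mod_cast Nat.factorial_pos N
  have hfinal : ((Nat.factorial N : ℝ) * Real.exp (β + 2 * M + ε + 4 * M * N + (2 + 4 * N) * ε * l)) *
      (1 - Real.exp (-1 : ℝ))⁻¹ ≤
      2 * (Nat.factorial N : ℝ) * Real.exp (β + 2 * M + ε + 4 * M * N) * Real.exp (δ * l) := by
    have hsplit : Real.exp (β + 2 * M + ε + 4 * M * N + (2 + 4 * N) * ε * l) =
        Real.exp (β + 2 * M + ε + 4 * M * N) * Real.exp ((2 + 4 * N) * ε * l) := by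
      rw [← Real.exp_add]
    have hexp_l : Real.exp ((2 + 4 * N) * ε * l) ≤ Real.exp (δ * l) := by
      refine Real.exp_le_exp.mpr ?_
      have h9 : (4 * N + 2 : ℝ) * ε ≤ δ := by
        rw [← le_div_iff₀' hden] at *
        exact hεδ
      have h10 : (0:ℝ) ≤ (l:ℝ) := Nat.cast_nonneg l
      nlinarith
    calc ((Nat.factorial N : ℝ) * Real.exp (β + 2 * M + ε + 4 * M * N + (2 + 4 * N) * ε * l)) *
        (1 - Real.exp (-1 : ℝ))⁻¹
        ≤ ((Nat.factorial N : ℝ) * Real.exp (β + 2 * M + ε + 4 * M * N + (2 + 4 * N) * ε * l)) * 2 := by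
          refine mul_le_mul_of_nonneg_left hinv2 (by positivity)
      _ = 2 * (Nat.factorial N : ℝ) * Real.exp (β + 2 * M + ε + 4 * M * N) *
            Real.exp ((2 + 4 * N) * ε * l) := by rw [hsplit]; ring
      _ ≤ 2 * (Nat.factorial N : ℝ) * Real.exp (β + 2 * M + ε + 4 * M * N) * Real.exp (δ * l) := by
          refine mul_le_mul_of_nonneg_left hexp_l (by positivity)
  linarith [htsum, hgeoval ▸ htsum, hfinal, hgeoval.le, hgeoval.ge]
end

section
/- For every t > 0, q(t) ≤ t/(D(N)·H(N)). (This is the sequence form of the off-diagonal heat kernel upper bound p_t(ω,η) ≤ t/(D(ω,η)·HARM(Σ([ω,η]))) used in the proof of Theorem 1.1.) -/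
open Filter Set

/-- off-diagonal upper bound, sequence form of
`p_t(ω,η) ≤ t/(D(ω,η)·HARM(Σ([ω,η])))` used in the proof of Theorem 1.1:
for every `t > 0`, `q(t) ≤ t/(D(N)·H(N))`. -/
theorem stmt7 (N : ℕ) (H D : ℕ → ℝ)
    (hH_anti : Antitone H) (hH0 : H 0 = 1) (hH_pos : ∀ n ≤ N, 0 < H n)
    (hD_anti : StrictAnti D) (hD_pos : ∀ n ≤ N, 0 < D n) :
    ∀ t : ℝ, 0 < t →
      (∑ n ∈ Finset.range (N + 1),
        (1 / H n) *
          ((if n = 0 then 1 else Real.exp (-t / D (n - 1))) - Real.exp (-t / D n))) ≤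
      t / (D N * H N) := by
  intro t ht
  have hHN : 0 < H N := hH_pos N le_rfl
  have hDN : 0 < D N := hD_pos N le_rfl
  set a : ℕ → ℝ := fun n => if n = 0 then 1 else Real.exp (-t / D (n - 1)) with ha
  have ha_succ : ∀ n, a (n + 1) = Real.exp (-t / D n) := by
    intro n; simp [ha]
  -- each term's exp difference is nonneg for n ≤ N
  have hdiff : ∀ n ≤ N, 0 ≤ a n - Real.exp (-t / D n) := by
    intro n hn
    have hDn : 0 < D n := hD_pos n hn
    rcases Nat.eq_zero_or_pos n with rfl | hnpos
    · have : Real.exp (-t / D 0) ≤ 1 := by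
        rw [Real.exp_le_one_iff]
        exact div_nonpos_of_nonpos_of_nonneg (by linarith) hDn.le
      simpa [ha] using this
    · have hlt : D n < D (n - 1) := hD_anti (by omega)
      have : -t / D (n - 1) ≥ -t / D n := by
        rw [ge_iff_le, div_le_div_iff₀ hDn (lt_trans hDn hlt), neg_mul, neg_mul,
          neg_le_neg_iff]
        exact mul_le_mul_of_nonneg_left hlt.le ht.le
      have := Real.exp_le_exp.mpr this
      have hne : n ≠ 0 := by omega
      simp only [ha, if_neg hne]
      linarith
  -- bound each coefficient by 1 / H N
  have hstep : (∑ n ∈ Finset.range (N + 1),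
      (1 / H n) * (a n - Real.exp (-t / D n))) ≤
      (1 / H N) * ∑ n ∈ Finset.range (N + 1), (a n - Real.exp (-t / D n)) := by
    rw [Finset.mul_sum]
    apply Finset.sum_le_sum
    intro n hn
    have hn' : n ≤ N := Nat.lt_succ_iff.mp (Finset.mem_range.mp hn)
    have hHn : 0 < H n := hH_pos n hn'
    have : 1 / H n ≤ 1 / H N := one_div_le_one_div_of_le hHN (hH_anti hn')
    exact mul_le_mul_of_nonneg_right this (hdiff n hn')
  have htel : ∑ n ∈ Finset.range (N + 1), (a n - Real.exp (-t / D n)) =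
      1 - Real.exp (-t / D N) := by
    have : ∀ n, a n - Real.exp (-t / D n) = a n - a (n + 1) := by
      intro n; rw [ha_succ]
    simp_rw [this]
    rw [Finset.sum_range_sub' a]
    simp [ha_succ, ha]
  calc (∑ n ∈ Finset.range (N + 1),
      (1 / H n) * (a n - Real.exp (-t / D n)))
      ≤ (1 / H N) * (1 - Real.exp (-t / D N)) := by rw [← htel]; exact hstep
    _ ≤ (1 / H N) * (t / D N) := by
        apply mul_le_mul_of_nonneg_left _ (by positivity)
        have := Real.add_one_le_exp (-(t / D N))
        have h : -t / D N = -(t / D N) := by ring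
        rw [h]; linarith
    _ = t / (D N * H N) := by rw [div_mul_eq_mul_div, one_mul, div_div]
end

section
/- The function q is differentiable on (0,∞) and satisfies t·q′(t) ≤ q(t) for every t > 0. (This is the inequality F_{ω,η}(t) ≥ F′_{ω,η}(t)·t established in the proof of Proposition 4.2, where F_{ω,η}(t) = p_t(ω,η).) -/
open Filter Set

/-- Kigami's off-diagonal heat kernel `q(t) = p_t(ω,η)` at confluence level `N`, in sequence
form: `q(t) = ∑_{n=0}^N (1/H(n))·(exp(−t/D(n−1)) − exp(−t/D(n)))`, with the convention
`exp(−t/D(−1)) := 1`. -/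
noncomputable def qfun (H D : ℕ → ℝ) (N : ℕ) (t : ℝ) : ℝ :=
  ∑ n ∈ Finset.range (N + 1),
    (1 / H n) * ((if n = 0 then 1 else Real.exp (-t / D (n - 1))) - Real.exp (-t / D n))

/-! Writing `λₙ = 1 / D n` and `λ₋₁ = 0`, `q` is a nonnegative combination of the differences
`e^{-λₙ₋₁ t} - e^{-λₙ t}` with `λₙ₋₁ ≤ λₙ`. For `f(t) = e^{-λ t}` one has
`t f'(t) - f(t) = -φ(λ t)` with `φ(x) = (1 + x) e^{-x}`, and `φ` is nonincreasing on `[0, ∞)`,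
so `φ(λₙ t) ≤ φ(λₙ₋₁ t)` gives `t g' ≤ g` for each difference `g`, and hence for `q`. -/

open Real

theorem one_add_mul_exp_neg_le_of_le {x y : ℝ} (hx : 0 ≤ x) (hxy : x ≤ y) :
    (1 + y) * exp (-y) ≤ (1 + x) * exp (-x) := by
  have h_tangent : 1 + y ≤ (1 + x) * exp (y - x) := calc
    1 + y ≤ (1 + x) * (y - x + 1) := by nlinarith
    _ ≤ (1 + x) * exp (y - x) := by gcongr; exact add_one_le_exp _
  calc (1 + y) * exp (-y) ≤ (1 + x) * exp (y - x) * exp (-y) := by gcongr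
    _ = (1 + x) * exp (-x) := by rw [mul_assoc, ← exp_add]; ring_nf

theorem hasDerivAt_exp_neg_mul (a t : ℝ) :
    HasDerivAt (fun s => exp (-(a * s))) (-a * exp (-(a * t))) t := by
  simpa [mul_comm] using ((hasDerivAt_id t).const_mul a).neg.exp

theorem mul_deriv_exp_sub_exp_le {a b t : ℝ} (ha : 0 ≤ a) (hab : a ≤ b) (ht : 0 ≤ t) :
    t * (-a * exp (-(a * t)) - -b * exp (-(b * t))) ≤ exp (-(a * t)) - exp (-(b * t)) := by
  have := one_add_mul_exp_neg_le_of_le (mul_nonneg ha ht) (mul_le_mul_of_nonneg_right hab ht)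
  linarith

section ExpSum

variable {ι : Type*} (s : Finset ι) (w a b : ι → ℝ)

theorem hasDerivAt_sum_exp_sub_exp (t : ℝ) :
    HasDerivAt (fun t => ∑ i ∈ s, w i * (exp (-(a i * t)) - exp (-(b i * t))))
      (∑ i ∈ s, w i * (-a i * exp (-(a i * t)) - -b i * exp (-(b i * t)))) t :=
  HasDerivAt.fun_sum fun i _ =>
    ((hasDerivAt_exp_neg_mul (a i) t).sub (hasDerivAt_exp_neg_mul (b i) t)).const_mul (w i)

theorem mul_deriv_sum_exp_sub_exp_le (hw : ∀ i ∈ s, 0 ≤ w i) (ha : ∀ i ∈ s, 0 ≤ a i)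
    (hab : ∀ i ∈ s, a i ≤ b i) {t : ℝ} (ht : 0 ≤ t) :
    t * deriv (fun t => ∑ i ∈ s, w i * (exp (-(a i * t)) - exp (-(b i * t)))) t ≤
      ∑ i ∈ s, w i * (exp (-(a i * t)) - exp (-(b i * t))) := by
  rw [(hasDerivAt_sum_exp_sub_exp s w a b t).deriv, Finset.mul_sum]
  refine Finset.sum_le_sum fun i hi => ?_
  rw [mul_left_comm]
  exact mul_le_mul_of_nonneg_left (mul_deriv_exp_sub_exp_le (ha i hi) (hab i hi) ht) (hw i hi)

end ExpSum

/-- `decayRate D 0 = 0` encodes the convention `exp (-t / D (-1)) = 1` of `qfun`. -/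
noncomputable def decayRate (D : ℕ → ℝ) : ℕ → ℝ
  | 0 => 0
  | n + 1 => 1 / D n

theorem qfun_eq_sum_decayRate (H D : ℕ → ℝ) (N : ℕ) :
    qfun H D N = fun t => ∑ n ∈ Finset.range (N + 1),
      1 / H n * (exp (-(decayRate D n * t)) - exp (-(decayRate D (n + 1) * t))) := by
  ext t
  refine Finset.sum_congr rfl fun n _ => ?_
  cases n <;> simp [decayRate, div_eq_inv_mul]

theorem decayRate_nonneg_and_le_succ {D : ℕ → ℝ} {N : ℕ} (hD_anti : Antitone D)
    (hD_pos : ∀ n ≤ N, 0 < D n) {n : ℕ} (hn : n ≤ N) :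
    0 ≤ decayRate D n ∧ decayRate D n ≤ decayRate D (n + 1) := by
  cases n with
  | zero => simp [decayRate, (hD_pos 0 hn).le]
  | succ m =>
    have hm : 0 < D (m + 1) := hD_pos _ hn
    exact ⟨by simp [decayRate, (hD_pos m (by omega)).le],
      one_div_le_one_div_of_le hm (hD_anti (Nat.le_succ m))⟩

theorem stmt8_general (N : ℕ) (H D : ℕ → ℝ)
    (hH_pos : ∀ n ≤ N, 0 < H n)
    (hD_anti : StrictAnti D) (hD_pos : ∀ n ≤ N, 0 < D n) :
    (∀ t ∈ Ioi (0 : ℝ), DifferentiableAt ℝ (qfun H D N) t) ∧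
    ∀ t ∈ Ioi (0 : ℝ), t * deriv (qfun H D N) t ≤ qfun H D N t := by
  have hrate n (hn : n ∈ Finset.range (N + 1)) :=
    decayRate_nonneg_and_le_succ hD_anti.antitone hD_pos (Finset.mem_range_succ_iff.mp hn)
  rw [qfun_eq_sum_decayRate]
  refine ⟨fun t _ => (hasDerivAt_sum_exp_sub_exp _ _ _ _ t).differentiableAt, fun t ht => ?_⟩
  refine mul_deriv_sum_exp_sub_exp_le _ _ _ _ (fun n hn => ?_) (fun n hn => (hrate n hn).1)
    (fun n hn => (hrate n hn).2) (le_of_lt ht)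
  exact one_div_nonneg.mpr (hH_pos n (Finset.mem_range_succ_iff.mp hn)).le

/-- inequality `F_{ω,η}(t) ≥ F′_{ω,η}(t)·t` in the proof of Proposition 4.2:
`q` is differentiable on `(0,∞)` and `t·q′(t) ≤ q(t)` for every `t > 0`. -/
theorem stmt8 (N : ℕ) (H D : ℕ → ℝ)
    (hH_anti : Antitone H) (hH0 : H 0 = 1) (hH_pos : ∀ n ≤ N, 0 < H n)
    (hD_anti : StrictAnti D) (hD_pos : ∀ n ≤ N, 0 < D n) :
    (∀ t ∈ Ioi (0 : ℝ), DifferentiableAt ℝ (qfun H D N) t) ∧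
    ∀ t ∈ Ioi (0 : ℝ), t * deriv (qfun H D N) t ≤ qfun H D N t :=
  stmt8_general N H D hH_pos hD_anti hD_pos
end

section
/- For every t with 0 < t < D(N), one has q′(t) ≥ (1/D(0))·exp(−t/D(0)), and consequently q(t) ≥ (t/D(0))·exp(−t/D(0)). (This is the lower bound on p_t(ω,η) for 0 < t < D(ω,η) established in the proof of Proposition 4.2, showing that the off-diagonal heat kernel is bounded below by a constant times t.) -/
open Filter Set

/-! Split off the `n = 0` term `1 - e^{-t/D 0}` of `q`. The remaining terms are nonnegative
because `D` decreases, and `1 - e^{-x} ≥ x e^{-x}` bounds the first. Differentiating, the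
remaining terms of `q'` are `(1/H n)(g(D n) - g(D (n-1)))` with `g(a) = e^{-t/a}/a`; they are
nonnegative because `g` is nonincreasing on `[t, ∞)`, as `x ↦ x e^{-x}` increases on `(-∞, 1]`. -/

open Real

lemma mul_exp_neg_monotoneOn : MonotoneOn (fun x : ℝ ↦ x * exp (-x)) (Iic 1) := by
  refine monotoneOn_of_hasDerivWithinAt_nonneg (f' := fun x ↦ (1 - x) * exp (-x))
    (convex_Iic 1) (by fun_prop) (fun x _ ↦ ?_) (fun x hx ↦ ?_)
  · exact ((hasDerivAt_id' x).mul (hasDerivAt_neg x).exp).congr_deriv (by ring)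
      |>.hasDerivWithinAt
  · rw [interior_Iic] at hx
    exact mul_nonneg (sub_nonneg.2 (le_of_lt hx)) (exp_pos _).le

lemma mul_exp_neg_le_one_sub_exp_neg (x : ℝ) : x * exp (-x) ≤ 1 - exp (-x) := by
  have := mul_le_mul_of_nonneg_right (add_one_le_exp x) (exp_pos (-x)).le
  rw [← exp_add, add_neg_cancel, exp_zero] at this
  linarith

lemma exp_neg_div_div_le {t a b : ℝ} (ht : 0 < t) (htb : t ≤ b) (hba : b ≤ a) :
    exp (-t / a) / a ≤ exp (-t / b) / b := by
  have hb : 0 < b := ht.trans_le htb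
  have hmono := mul_exp_neg_monotoneOn (a := t / a) (b := t / b)
    ((div_le_one (hb.trans_le hba)).2 (htb.trans hba)) ((div_le_one hb).2 htb)
    (div_le_div_of_nonneg_left ht.le hb hba)
  simp only [← neg_div] at hmono
  rw [← mul_le_mul_iff_right₀ ht]
  convert hmono using 1 <;> ring

lemma exp_neg_div_le_exp_neg_div {t a b : ℝ} (ht : 0 ≤ t) (hb : 0 < b) (hba : b ≤ a) :
    exp (-t / b) ≤ exp (-t / a) := by
  simp only [neg_div, exp_le_exp, neg_le_neg_iff]
  gcongr

lemma hasDerivAt_exp_neg_div (c t : ℝ) :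
    HasDerivAt (fun t ↦ exp (-t / c)) (-(exp (-t / c) / c)) t :=
  ((hasDerivAt_neg t).div_const c).exp.congr_deriv (by ring)

lemma qfun_eq (H D : ℕ → ℝ) (N : ℕ) :
    qfun H D N = fun t ↦ (1 / H 0) * (1 - exp (-t / D 0)) +
      ∑ n ∈ Finset.range N, (1 / H (n + 1)) * (exp (-t / D n) - exp (-t / D (n + 1))) := by
  ext t
  rw [qfun, Finset.sum_range_succ', add_comm]
  simp

lemma hasDerivAt_qfun (H D : ℕ → ℝ) (N : ℕ) (t : ℝ) :
    HasDerivAt (qfun H D N) ((1 / H 0) * (exp (-t / D 0) / D 0) +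
      ∑ n ∈ Finset.range N,
        (1 / H (n + 1)) * (exp (-t / D (n + 1)) / D (n + 1) - exp (-t / D n) / D n)) t := by
  have htail : HasDerivAt (fun t ↦ ∑ n ∈ Finset.range N,
        (1 / H (n + 1)) * (exp (-t / D n) - exp (-t / D (n + 1))))
      (∑ n ∈ Finset.range N,
        (1 / H (n + 1)) * (exp (-t / D (n + 1)) / D (n + 1) - exp (-t / D n) / D n)) t :=
    HasDerivAt.fun_sum fun n _ ↦
      (((hasDerivAt_exp_neg_div _ t).sub (hasDerivAt_exp_neg_div _ t)).const_mul _).congr_deriv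
        (by ring)
  rw [qfun_eq]
  exact (((hasDerivAt_const t 1).sub (hasDerivAt_exp_neg_div _ t)).const_mul _).add htail
    |>.congr_deriv (by ring)

theorem stmt9_general (N : ℕ) (H D : ℕ → ℝ)
    (hH0 : H 0 = 1) (hH_pos : ∀ n ≤ N, 0 < H n)
    (hD_anti : StrictAnti D) :
    ∀ t : ℝ, 0 < t → t < D N →
      (1 / D 0) * Real.exp (-t / D 0) ≤ deriv (qfun H D N) t ∧
      (t / D 0) * Real.exp (-t / D 0) ≤ qfun H D N t := by
  intro t ht htD
  have hDt : ∀ n ≤ N, t < D n := fun n hn ↦ htD.trans_le (hD_anti.antitone hn)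
  have hcoef : ∀ n ∈ Finset.range N, 0 ≤ 1 / H (n + 1) := fun n hn ↦
    (one_div_pos.2 (hH_pos _ (Finset.mem_range.1 hn))).le
  have hstep : ∀ n ∈ Finset.range N, D (n + 1) ≤ D n := fun n _ ↦ hD_anti.antitone n.le_succ
  have hderiv_tail : 0 ≤ ∑ n ∈ Finset.range N,
      (1 / H (n + 1)) * (exp (-t / D (n + 1)) / D (n + 1) - exp (-t / D n) / D n) :=
    Finset.sum_nonneg fun n hn ↦ mul_nonneg (hcoef n hn) <| sub_nonneg.2 <|
      exp_neg_div_div_le ht (hDt _ (Finset.mem_range.1 hn)).le (hstep n hn)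
  have hq_tail : 0 ≤ ∑ n ∈ Finset.range N,
      (1 / H (n + 1)) * (exp (-t / D n) - exp (-t / D (n + 1))) :=
    Finset.sum_nonneg fun n hn ↦ mul_nonneg (hcoef n hn) <| sub_nonneg.2 <|
      exp_neg_div_le_exp_neg_div ht.le (ht.trans (hDt _ (Finset.mem_range.1 hn))) (hstep n hn)
  constructor
  · rw [(hasDerivAt_qfun H D N t).deriv, hH0]
    linarith [show 1 / D 0 * exp (-t / D 0) = 1 / 1 * (exp (-t / D 0) / D 0) by ring]
  · have hfirst := mul_exp_neg_le_one_sub_exp_neg (t / D 0)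
    rw [← neg_div] at hfirst
    rw [qfun_eq, hH0]
    linarith

/-- lower bound on the off-diagonal heat kernel for `0 < t < D(ω,η)` from the
proof of Proposition 4.2: `q′(t) ≥ (1/D(0))·exp(−t/D(0))` and consequently
`q(t) ≥ (t/D(0))·exp(−t/D(0))`. -/
theorem stmt9 (N : ℕ) (H D : ℕ → ℝ)
    (hH_anti : Antitone H) (hH0 : H 0 = 1) (hH_pos : ∀ n ≤ N, 0 < H n)
    (hD_anti : StrictAnti D) (hD_pos : ∀ n ≤ N, 0 < D n) :
    ∀ t : ℝ, 0 < t → t < D N →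
      (1 / D 0) * Real.exp (-t / D 0) ≤ deriv (qfun H D N) t ∧
      (t / D 0) * Real.exp (-t / D 0) ≤ qfun H D N t :=
  stmt9_general N H D hH0 hH_pos hD_anti
end

section
/- Under these hypotheses, set κ := β/(β − L). There exists ε₀ > 0 such that for every ε ∈ (0, ε₀) there exist real numbers δ″ > δ′ > 0 and constants C₁ > 0, t₁ > 0 with the property: for every t ∈ (0, t₁] and every N ∈ ℕ satisfying t^{1+δ″} ≤ D(N) ≤ t^{1+δ′}, one has q_N(t) ≥ C₁·t^{−(κ−ε)}. (This is the near-diagonal heat kernel lower bound (4.8) in the proof of Proposition 4.2: p_t(ω,η) ≥ C₁/t^{κ_λ−ε} for η ∈ B_D(ω, t^{1+δ′}) \\ B_D(ω, t^{1+δ″}).) -/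
open Filter Set

/-- Kigami's heat kernel `p_t(ω,η)` at confluence level `n`, in sequence form:
`q_n(t) = ∑_{k=0}^n (1/H(k))·(exp(−t/D(k−1)) − exp(−t/D(k)))`, with the convention
`exp(−t/D(−1)) := 1`. -/
noncomputable def qn (H D : ℕ → ℝ) (n : ℕ) (t : ℝ) : ℝ :=
  ∑ k ∈ Finset.range (n + 1),
    (1 / H k) * ((if k = 0 then 1 else Real.exp (-t / D (k - 1))) - Real.exp (-t / D k))

lemma qn_term_nonneg (H D : ℕ → ℝ) (hH_pos : ∀ n, 0 < H n)
    (hD_anti : StrictAnti D) (hD_pos : ∀ n, 0 < D n) (t : ℝ) (ht : 0 < t) (k : ℕ) :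
    0 ≤ (1 / H k) * ((if k = 0 then 1 else Real.exp (-t / D (k - 1))) - Real.exp (-t / D k)) := by
  apply mul_nonneg (one_div_nonneg.mpr (hH_pos k).le)
  rw [sub_nonneg]
  by_cases hk : k = 0
  · subst hk
    rw [if_pos rfl, Real.exp_le_one_iff, neg_div]
    have := hD_pos 0
    have : 0 ≤ t / D 0 := by positivity
    linarith
  · simp only [hk, if_false]
    apply Real.exp_le_exp.mpr
    rw [neg_div, neg_div, neg_le_neg_iff]
    apply div_le_div_of_nonneg_left ht.le (hD_pos k)
    exact hD_anti.antitone (Nat.sub_le k 1)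

lemma qn_ge (H D : ℕ → ℝ) (hH_anti : Antitone H) (hH_pos : ∀ n, 0 < H n)
    (hD_anti : StrictAnti D) (hD_pos : ∀ n, 0 < D n) (t : ℝ) (ht : 0 < t)
    (m : ℕ) (hm : 1 ≤ m) :
    ∀ N, m ≤ N →
      (1 / H m) * (Real.exp (-t / D (m - 1)) - Real.exp (-t / D N)) ≤ qn H D N t := by
  intro N hN
  induction N, hN using Nat.le_induction with
  | base =>
    rw [qn, Finset.sum_range_succ]
    have hm0 : m ≠ 0 := by omega
    rw [if_neg hm0]
    have hsum : (0:ℝ) ≤ ∑ k ∈ Finset.range m,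
        (1 / H k) * ((if k = 0 then 1 else Real.exp (-t / D (k - 1))) - Real.exp (-t / D k)) :=
      Finset.sum_nonneg fun k _ => qn_term_nonneg H D hH_pos hD_anti hD_pos t ht k
    linarith
  | succ N hN ih =>
    rw [qn, Finset.sum_range_succ, ← qn]
    have hN0 : N + 1 ≠ 0 := by omega
    rw [if_neg hN0]
    have hsucc : N + 1 - 1 = N := by omega
    rw [hsucc]
    have hHle : 1 / H m ≤ 1 / H (N + 1) :=
      one_div_le_one_div_of_le (hH_pos (N + 1)) (hH_anti (by omega : m ≤ N + 1))
    have hEle : Real.exp (-t / D (N + 1)) ≤ Real.exp (-t / D N) := by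
      apply Real.exp_le_exp.mpr
      rw [neg_div, neg_div, neg_le_neg_iff]
      exact div_le_div_of_nonneg_left ht.le (hD_pos (N + 1)) (hD_anti (by omega)).le
    have h2 : (1 / H m) * (Real.exp (-t / D N) - Real.exp (-t / D (N + 1))) ≤
        (1 / H (N + 1)) * (Real.exp (-t / D N) - Real.exp (-t / D (N + 1))) :=
      mul_le_mul_of_nonneg_right hHle (by linarith)
    nlinarith [ih]

/-- near-diagonal lower bound (4.8) in the proof of Proposition 4.2: with
`κ = β/(β−L)`, there is `ε₀ > 0` such that for all `ε ∈ (0,ε₀)` there are `δ″ > δ′ > 0`,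
`C₁ > 0`, `t₁ > 0` with `q_N(t) ≥ C₁·t^{−(κ−ε)}` whenever `0 < t ≤ t₁` and
`t^{1+δ″} ≤ D(N) ≤ t^{1+δ′}`. -/
theorem stmt11 (H D R : ℕ → ℝ) (β L : ℝ)
    (hH_anti : Antitone H) (hH0 : H 0 = 1) (hH_pos : ∀ n, 0 < H n)
    (hD_anti : StrictAnti D) (hD_pos : ∀ n, 0 < D n)
    (hR_pos : ∀ n, 0 < R n) (hDHR : ∀ n, D n = H n * R n)
    (hβ : β > max 0 L)
    (hHlim : Tendsto (fun n : ℕ => Real.log (H n) / n) atTop (nhds (-β)))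
    (hRlim : Tendsto (fun n : ℕ => Real.log (R n) / n) atTop (nhds L)) :
    ∃ ε₀ : ℝ, 0 < ε₀ ∧ ∀ ε : ℝ, 0 < ε → ε < ε₀ →
      ∃ δ' δ'' C₁ t₁ : ℝ, 0 < δ' ∧ δ' < δ'' ∧ 0 < C₁ ∧ 0 < t₁ ∧
        ∀ t : ℝ, 0 < t → t ≤ t₁ → ∀ N : ℕ,
          t ^ (1 + δ'') ≤ D N → D N ≤ t ^ (1 + δ') →
          C₁ * t ^ (-(β / (β - L) - ε)) ≤ qn H D N t := by
  classical
  have hβ0 : 0 < β := lt_of_le_of_lt (le_max_left 0 L) hβ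
  have hβL : 0 < β - L := sub_pos.mpr (lt_of_le_of_lt (le_max_right 0 L) hβ)
  set κ := β / (β - L) with hκ
  have hκpos : 0 < κ := div_pos hβ0 hβL
  refine ⟨1, one_pos, fun ε hε hε1 => ?_⟩
  -- choose ε'
  set ε' := min (β / 2) (ε * (β - L) / (1 + κ)) with hε'def
  have hε'pos : 0 < ε' := lt_min (by linarith) (by positivity)
  have hε'β : ε' ≤ β / 2 := min_le_left _ _
  have hε'2 : ε' * (1 + κ) ≤ ε * (β - L) := by
    have h := min_le_right (β / 2) (ε * (β - L) / (1 + κ))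
    rw [← hε'def] at h
    rw [← le_div_iff₀ (by linarith : (0:ℝ) < 1 + κ)]
    exact h
  -- key exponent inequality
  have hkey : (κ - ε) * (β - L + ε') ≤ β - ε' := by
    have hκβ : κ * (β - L) = β := div_mul_cancel₀ β (by linarith)
    nlinarith [mul_nonneg hε.le hε'pos.le]
  -- asymptotics
  have hDlim : Tendsto (fun n : ℕ => Real.log (D n) / n) atTop (nhds (-β + L)) := by
    have := hHlim.add hRlim
    apply this.congr
    intro n
    rw [hDHR n, Real.log_mul (hH_pos n).ne' (hR_pos n).ne', add_div]
  have hH' : ∀ᶠ n : ℕ in atTop, Real.log (H n) / n < -β + ε' :=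
    hHlim.eventually_lt_const (by linarith)
  have hD' : ∀ᶠ n : ℕ in atTop, -β + L - ε' < Real.log (D n) / n :=
    hDlim.eventually_const_lt (by linarith)
  obtain ⟨n₀', hn₀'⟩ := (hH'.and hD').exists_forall_of_atTop
  set n₀ := max n₀' 1 with hn₀def
  have hn₀1 : 1 ≤ n₀ := le_max_right _ _
  have hHbound : ∀ n, n₀ ≤ n → H n ≤ Real.exp ((-β + ε') * n) := by
    intro n hn
    have hn1 : 1 ≤ n := le_trans hn₀1 hn
    have hnpos : (0:ℝ) < n := by exact_mod_cast hn1
    have h := (hn₀' n (le_trans (le_max_left _ _) hn)).1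
    rw [div_lt_iff₀ hnpos] at h
    calc H n = Real.exp (Real.log (H n)) := (Real.exp_log (hH_pos n)).symm
      _ ≤ Real.exp ((-β + ε') * n) := Real.exp_le_exp.mpr h.le
  have hDbound : ∀ n, n₀ ≤ n → Real.exp ((L - β - ε') * n) ≤ D n := by
    intro n hn
    have hn1 : 1 ≤ n := le_trans hn₀1 hn
    have hnpos : (0:ℝ) < n := by exact_mod_cast hn1
    have h := (hn₀' n (le_trans (le_max_left _ _) hn)).2
    rw [lt_div_iff₀ hnpos] at h
    calc Real.exp ((L - β - ε') * n) ≤ Real.exp (Real.log (D n)) :=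
          Real.exp_le_exp.mpr (by linarith)
      _ = D n := Real.exp_log (hD_pos n)
  -- constants
  refine ⟨1, 2, Real.exp (-1) - Real.exp (-2), min (1/2) (D n₀ / 2),
    one_pos, by norm_num,
    sub_pos.mpr (Real.exp_lt_exp.mpr (by norm_num)),
    lt_min (by norm_num) (by linarith [hD_pos n₀] : (0:ℝ) < D n₀ / 2), ?_⟩
  intro t ht ht₁ N hlow hhigh
  have ht2 : t ≤ 1/2 := le_trans ht₁ (min_le_left _ _)
  have ht1' : t ≤ 1 := by linarith
  have htDn₀ : t < D n₀ :=
    lt_of_le_of_lt (le_trans ht₁ (min_le_right _ _)) (half_lt_self (hD_pos n₀))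
  -- t^(1+1) computations
  have htt : t ^ ((1:ℝ) + 1) = t * t := by
    rw [Real.rpow_add ht, Real.rpow_one]
  have hDNt2 : D N ≤ t * t := by rw [← htt]; exact hhigh
  have hDNt : D N ≤ t := le_trans hDNt2 (by nlinarith)
  have hex : ∃ n, D n ≤ t := ⟨N, hDNt⟩
  set m := Nat.find hex with hmdef
  have hDm : D m ≤ t := Nat.find_spec hex
  have hmN : m ≤ N := Nat.find_min' hex hDNt
  have hn₀m : n₀ < m := by
    by_contra h
    push_neg at h
    have := hD_anti.antitone h
    linarith
  have hm1 : 1 ≤ m := le_trans hn₀1 hn₀m.le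
  have hDm1 : t < D (m - 1) := by
    have h := Nat.find_min hex (show m - 1 < m by omega)
    push_neg at h
    exact h
  -- exp bounds
  have hA : Real.exp (-1) ≤ Real.exp (-t / D (m - 1)) := by
    apply Real.exp_le_exp.mpr
    rw [neg_div, neg_le_neg_iff, div_le_one (hD_pos _)]
    exact hDm1.le
  have hB : Real.exp (-t / D N) ≤ Real.exp (-2) := by
    apply Real.exp_le_exp.mpr
    rw [neg_div, neg_le_neg_iff]
    have h1 : t / (t * t) ≤ t / D N :=
      div_le_div_of_nonneg_left ht.le (hD_pos N) hDNt2
    have h2 : t / (t * t) = 1 / t := by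
      field_simp
    have h3 : (2:ℝ) ≤ 1 / t := by
      rw [le_div_iff₀ ht]; linarith
    linarith
  -- H m ≤ t^(κ - ε)
  have hHm : H m ≤ t ^ (κ - ε) := by
    by_cases hc : 0 < κ - ε
    · have h1 : H m ≤ Real.exp ((-β + ε') * m) := hHbound m hn₀m.le
      have h2 : Real.exp ((L - β - ε') * m) ≤ t := le_trans (hDbound m hn₀m.le) hDm
      have h3 : Real.exp ((L - β - ε') * m) ^ (κ - ε) ≤ t ^ (κ - ε) :=
        Real.rpow_le_rpow (Real.exp_pos _).le h2 hc.le
      rw [← Real.exp_mul] at h3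
      refine le_trans (le_trans h1 ?_) h3
      apply Real.exp_le_exp.mpr
      have hmpos : (0:ℝ) ≤ (m:ℝ) := Nat.cast_nonneg m
      have hk' : (-β + ε') ≤ (L - β - ε') * (κ - ε) := by nlinarith
      calc (-β + ε') * m ≤ ((L - β - ε') * (κ - ε)) * m :=
            mul_le_mul_of_nonneg_right hk' hmpos
        _ = (L - β - ε') * m * (κ - ε) := by ring
    · push_neg at hc
      have h1 : H m ≤ 1 := hH0 ▸ hH_anti (Nat.zero_le m)
      have h2 : (1:ℝ) ≤ t ^ (κ - ε) :=
        Real.one_le_rpow_of_pos_of_le_one_of_nonpos ht ht1' hc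
      linarith
  -- assemble
  have hmain := qn_ge H D hH_anti hH_pos hD_anti hD_pos t ht m hm1 N hmN
  have hC : Real.exp (-1) - Real.exp (-2) ≤
      Real.exp (-t / D (m - 1)) - Real.exp (-t / D N) := by linarith
  have hHmpos : 0 < H m := hH_pos m
  have htpow : 0 < t ^ (κ - ε) := Real.rpow_pos_of_pos ht _
  have hinv : t ^ (-(κ - ε)) ≤ 1 / H m := by
    rw [Real.rpow_neg ht.le, ← one_div]
    exact one_div_le_one_div_of_le hHmpos hHm
  have hCpos : (0:ℝ) < Real.exp (-1) - Real.exp (-2) :=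
    sub_pos.mpr (Real.exp_lt_exp.mpr (by norm_num))
  have hstep : (Real.exp (-1) - Real.exp (-2)) * t ^ (-(κ - ε)) ≤
      (1 / H m) * (Real.exp (-t / D (m - 1)) - Real.exp (-t / D N)) := by
    calc (Real.exp (-1) - Real.exp (-2)) * t ^ (-(κ - ε))
        ≤ (Real.exp (-1) - Real.exp (-2)) * (1 / H m) :=
          mul_le_mul_of_nonneg_left hinv hCpos.le
      _ = (1 / H m) * (Real.exp (-1) - Real.exp (-2)) := by ring
      _ ≤ (1 / H m) * (Real.exp (-t / D (m - 1)) - Real.exp (-t / D N)) :=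
          mul_le_mul_of_nonneg_left hC (by positivity)
  exact le_trans hstep hmain
end

section
/- For every integer l ≥ 1 and every t with 0 < t ≤ D(l−1), one has p(t) ≥ (1/e)·(1/H(l)) (as an inequality in (0,∞]). (This is the sequence form of the on-diagonal heat kernel lower bound p_t(ω,ω) ≥ e^{−1}/HARM(B_D(ω,t)) used in the proof of Theorem 1.1: when D(l) < t ≤ D(l−1) the ball B_D(ω,t) equals the cylinder Σ([ω]_l) of measure H(l).) -/
open Filter Set

/-- Statement 14 (on-diagonal lower bound `p_t(ω,ω) ≥ e⁻¹/HARM(B_D(ω,t))` in sequence form,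
as an inequality in `(0,∞]`): for every `l ≥ 1` and `0 < t ≤ D(l−1)`,
`p(t) ≥ (1/e)·(1/H(l))`, where
`p(t) = 1 + ∑_{n=0}^∞ (1/H(n+1) − 1/H(n))·exp(−t/D(n))` is computed in `ℝ≥0∞`. -/
theorem stmt14 (H D : ℕ → ℝ)
    (hH_anti : Antitone H) (hH0 : H 0 = 1) (hH_pos : ∀ n, 0 < H n)
    (hD_anti : StrictAnti D) (hD_pos : ∀ n, 0 < D n) :
    ∀ l : ℕ, 1 ≤ l → ∀ t : ℝ, 0 < t → t ≤ D (l - 1) →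
      ENNReal.ofReal ((1 / Real.exp 1) * (1 / H l)) ≤
        1 + ∑' n : ℕ, ENNReal.ofReal ((1 / H (n + 1) - 1 / H n) * Real.exp (-t / D n)) := by
  intro l hl t ht htD
  set f : ℕ → ℝ := fun n => (1 / H (n + 1) - 1 / H n) * Real.exp (-t / D n) with hf
  have hterm_nonneg : ∀ n, 0 ≤ f n := by
    intro n
    apply mul_nonneg
    · have h1 := hH_anti (Nat.le_succ n)
      have h2 := one_div_le_one_div_of_le (hH_pos (n + 1)) h1
      linarith
    · positivity
  have hS : ∀ n ∈ Finset.range l, (1 / H (n + 1) - 1 / H n) * Real.exp (-1 : ℝ) ≤ f n := by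
    intro n hn
    apply mul_le_mul_of_nonneg_left
    · apply Real.exp_le_exp.2
      have hn' : n ≤ l - 1 := Nat.le_sub_one_of_lt (Finset.mem_range.1 hn)
      have hDn : D (l - 1) ≤ D n := hD_anti.antitone hn'
      have hDnpos := hD_pos n
      rw [neg_div, neg_le_neg_iff, div_le_one hDnpos]
      linarith
    · have h1 := hH_anti (Nat.le_succ n)
      have h2 := one_div_le_one_div_of_le (hH_pos (n + 1)) h1
      linarith
  have hsum_lb : Real.exp (-1) * (1 / H l - 1) ≤ ∑ n ∈ Finset.range l, f n := by
    have htel : ∑ n ∈ Finset.range l, (1 / H (n + 1) - 1 / H n) = 1 / H l - 1 := by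
      rw [Finset.sum_range_sub (fun n => 1 / H n), hH0]
      norm_num
    calc Real.exp (-1) * (1 / H l - 1)
        = ∑ n ∈ Finset.range l, (1 / H (n + 1) - 1 / H n) * Real.exp (-1 : ℝ) := by
          rw [← Finset.sum_mul, htel, mul_comm]
      _ ≤ ∑ n ∈ Finset.range l, f n := Finset.sum_le_sum hS
  have hreal : (1 / Real.exp 1) * (1 / H l) ≤ 1 + ∑ n ∈ Finset.range l, f n := by
    have he : Real.exp (-1 : ℝ) = 1 / Real.exp 1 := by
      rw [Real.exp_neg, inv_eq_one_div]
    have he1 : Real.exp (-1 : ℝ) ≤ 1 := by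
      rw [he]
      have := Real.one_le_exp (le_of_lt one_pos)
      rw [div_le_one (Real.exp_pos 1)]
      exact this
    rw [← he]
    nlinarith [hsum_lb]
  calc ENNReal.ofReal ((1 / Real.exp 1) * (1 / H l))
      ≤ ENNReal.ofReal (1 + ∑ n ∈ Finset.range l, f n) := ENNReal.ofReal_le_ofReal hreal
    _ = 1 + ENNReal.ofReal (∑ n ∈ Finset.range l, f n) := by
        rw [ENNReal.ofReal_add (by norm_num) (Finset.sum_nonneg fun n _ => hterm_nonneg n),
          ENNReal.ofReal_one]
    _ = 1 + ∑ n ∈ Finset.range l, ENNReal.ofReal (f n) := by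
        rw [ENNReal.ofReal_sum_of_nonneg fun n _ => hterm_nonneg n]
    _ ≤ 1 + ∑' n : ℕ, ENNReal.ofReal (f n) := by
        gcongr
        exact ENNReal.sum_le_tsum _
end

section
/- For every l ∈ ℕ and every t ≥ D(l), one has (as an inequality in [0,∞]): p(t) ≤ (1/H(l))·(1 + ∑_{n=l}^∞ (H(l)/H(n+1))·exp(−D(l)/D(n))). (This combines the telescoping bound (4.2) for the first l terms with the tail bound (4.3) in the proof of Theorem 1.1, and gives the on-diagonal upper bound log p_t(ω,ω) ≤ log(1/H(l)) + log(1 + tail) of display (4.6).) -/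
open Filter Set

/-! The first `l` terms of `p(t)` are bounded by dropping the exponentials, after which they
telescope to `1/H(l) - 1`. In the remaining terms one drops `-1/H(n)` and uses `t ≥ D(l)` to
replace `exp(-t/D(n))` by `exp(-D(l)/D(n))`. -/

lemma ofReal_add_sum_ofReal_sub_mul_le {a w : ℕ → ℝ} (ha : Monotone a) (ha0 : 0 ≤ a 0)
    (hw : ∀ n, w n ≤ 1) (l : ℕ) :
    ENNReal.ofReal (a 0) + ∑ n ∈ Finset.range l, ENNReal.ofReal ((a (n + 1) - a n) * w n) ≤
      ENNReal.ofReal (a l) := by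
  have hinc : ∀ n, 0 ≤ a (n + 1) - a n := fun n => sub_nonneg.mpr (ha n.le_succ)
  calc ENNReal.ofReal (a 0) + ∑ n ∈ Finset.range l, ENNReal.ofReal ((a (n + 1) - a n) * w n)
      ≤ ENNReal.ofReal (a 0) + ∑ n ∈ Finset.range l, ENNReal.ofReal (a (n + 1) - a n) := by
        gcongr with n
        exact mul_le_of_le_one_right (hinc n) (hw n)
    _ = ENNReal.ofReal (a 0 + ∑ n ∈ Finset.range l, (a (n + 1) - a n)) := by
        rw [ENNReal.ofReal_add ha0 (Finset.sum_nonneg fun n _ => hinc n),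
          ENNReal.ofReal_sum_of_nonneg fun n _ => hinc n]
    _ = ENNReal.ofReal (a l) := by
        rw [Finset.sum_range_sub a, add_sub_cancel]

lemma sub_mul_exp_neg_div_le {a b d s t : ℝ} (ha : 0 ≤ a) (hb : 0 ≤ b) (hd : 0 < d)
    (hst : s ≤ t) : (b - a) * Real.exp (-t / d) ≤ b * Real.exp (-(s / d)) := by
  refine mul_le_mul (sub_le_self b ha) ?_ (Real.exp_pos _).le hb
  rw [Real.exp_le_exp, neg_div, neg_le_neg_iff]
  gcongr

lemma ENNReal.ofReal_mul_one_add_tsum_ofReal {c : ℝ} (hc : 0 ≤ c) (x : ℕ → ℝ) :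
    ENNReal.ofReal c * (1 + ∑' k, ENNReal.ofReal (x k)) =
      ENNReal.ofReal c + ∑' k, ENNReal.ofReal (c * x k) := by
  simp only [mul_add, mul_one, ← ENNReal.tsum_mul_left, ENNReal.ofReal_mul hc]

theorem stmt15_general (H D : ℕ → ℝ)
    (hH_anti : Antitone H) (hH0 : H 0 = 1) (hH_pos : ∀ n, 0 < H n)
    (hD_pos : ∀ n, 0 < D n) :
    ∀ l : ℕ, ∀ t : ℝ, D l ≤ t →
      1 + ∑' n : ℕ, ENNReal.ofReal ((1 / H (n + 1) - 1 / H n) * Real.exp (-t / D n)) ≤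
        ENNReal.ofReal (1 / H l) *
          (1 + ∑' k : ℕ,
            ENNReal.ofReal ((H l / H (l + k + 1)) * Real.exp (-(D l / D (l + k))))) := by
  intro l t ht
  have hinv_nonneg : ∀ n, 0 ≤ 1 / H n := fun n => one_div_nonneg.mpr (hH_pos n).le
  have hinv_mono : Monotone fun n => 1 / H n := fun m n hmn =>
    one_div_le_one_div_of_le (hH_pos n) (hH_anti hmn)
  have hexp_le_one : ∀ n, Real.exp (-t / D n) ≤ 1 := fun n =>
    Real.exp_le_one_iff.mpr <|
      div_nonpos_of_nonpos_of_nonneg (by linarith [hD_pos l]) (hD_pos n).le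
  have hhead := ofReal_add_sum_ofReal_sub_mul_le hinv_mono (hinv_nonneg 0) hexp_le_one l
  rw [hH0, div_one, ENNReal.ofReal_one] at hhead
  have htail : ∀ k, ENNReal.ofReal
      ((1 / H (k + l + 1) - 1 / H (k + l)) * Real.exp (-t / D (k + l))) ≤
      ENNReal.ofReal (1 / H l * (H l / H (l + k + 1) * Real.exp (-(D l / D (l + k))))) := by
    intro k
    rw [← mul_assoc, div_mul_div_cancel₀ (hH_pos l).ne', add_comm k l]
    exact ENNReal.ofReal_le_ofReal <| sub_mul_exp_neg_div_le (hinv_nonneg _)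
      (hinv_nonneg _) (hD_pos _) ht
  rw [← ENNReal.summable.sum_add_tsum_nat_add' (k := l), ← add_assoc,
    ENNReal.ofReal_mul_one_add_tsum_ofReal (hinv_nonneg l)]
  exact add_le_add hhead (ENNReal.tsum_le_tsum htail)

/-- on-diagonal upper bound combining (4.2) and (4.3) in the proof of
Theorem 1.1, as an inequality in `[0,∞]`: for every `l` and every `t ≥ D(l)`,
`p(t) ≤ (1/H(l))·(1 + ∑_{n=l}^∞ (H(l)/H(n+1))·exp(−D(l)/D(n)))`, where
`p(t) = 1 + ∑_{n=0}^∞ (1/H(n+1) − 1/H(n))·exp(−t/D(n))` is computed in `ℝ≥0∞`. -/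
theorem stmt15 (H D : ℕ → ℝ)
    (hH_anti : Antitone H) (hH0 : H 0 = 1) (hH_pos : ∀ n, 0 < H n)
    (hD_anti : StrictAnti D) (hD_pos : ∀ n, 0 < D n) :
    ∀ l : ℕ, ∀ t : ℝ, D l ≤ t →
      1 + ∑' n : ℕ, ENNReal.ofReal ((1 / H (n + 1) - 1 / H n) * Real.exp (-t / D n)) ≤
        ENNReal.ofReal (1 / H l) *
          (1 + ∑' k : ℕ,
            ENNReal.ofReal ((H l / H (l + k + 1)) * Real.exp (-(D l / D (l + k))))) :=
  stmt15_general H D hH_anti hH0 hH_pos hD_pos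
end
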